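/- arXiv:2106.08534 — 9 statements merged into one kernel-verified Lean document; each statement's English description precedes it below -/
import Mathlib

section
/- The function g(N) = ∫_0^{π/2} 1/√(2 - N²(1 + sin²θ)) dθ tends to +∞ as N → 1⁻. In particular, for N > √(2/3), setting δ = √((2-2N²)/N²) < 1, one has g(N) > -(1/(√2 N)) log δ. -/
open MeasureTheory

/-- `g N = ∫_0^{π/2} (2 - N²(1 + sin²θ))^{-1/2} dθ`. -/
noncomputable def g (N : ℝ) : ℝ :=
  ∫ θ in (0:ℝ)..(Real.pi / 2), 1 / Real.sqrt (2 - N ^ 2 * (1 + Real.sin θ ^ 2))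

/-!
Writing `δ² = (2 - 2N²)/N²`, the radicand is `N²(δ² + cos²θ)`, and `cos θ ≤ π/2 - θ` gives
`√(2 - N²(1 + sin²θ)) ≤ N (δ + π/2 - θ)`. Integrating the reciprocal,
`g N ≥ N⁻¹ log ((δ + π/2)/δ) > -log δ`, and `δ → 0⁺` as `N → 1⁻`. For `N > √(2/3)` moreover
`δ < 1` and `√2 N > 1`, so `-log δ` dominates `-(1/(√2 N)) log δ`.
-/

open Real Filter Set Topology

noncomputable def delta (N : ℝ) : ℝ := √((2 - 2 * N ^ 2) / N ^ 2)

lemma delta_pos {N : ℝ} (h0 : 0 < N) (h1 : N < 1) : 0 < delta N :=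
  sqrt_pos.2 (div_pos (by nlinarith) (by positivity))

lemma delta_lt_one {N : ℝ} (hN : √(2 / 3) < N) : delta N < 1 := by
  have hN0 : 0 < N := (sqrt_nonneg _).trans_lt hN
  have hN2 : 2 / 3 < N ^ 2 := (sqrt_lt' hN0).1 hN
  rw [delta, sqrt_lt' one_pos, div_lt_iff₀ (by positivity)]
  linarith

lemma tendsto_delta_nhdsLT_one : Tendsto delta (𝓝[<] 1) (𝓝[>] 0) := by
  refine tendsto_nhdsWithin_iff.2 ⟨?_, ?_⟩
  · have hcont : ContinuousAt delta 1 := by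
      unfold delta
      fun_prop (disch := norm_num)
    simpa [delta] using hcont.tendsto.mono_left nhdsWithin_le_nhds
  · filter_upwards [Ioo_mem_nhdsLT zero_lt_one] with N hN
    exact delta_pos hN.1 hN.2

lemma two_sub_sq_mul_eq {N : ℝ} (h0 : 0 < N) (h1 : N < 1) (θ : ℝ) :
    2 - N ^ 2 * (1 + sin θ ^ 2) = N ^ 2 * (delta N ^ 2 + cos θ ^ 2) := by
  rw [delta, sq_sqrt (div_nonneg (by nlinarith) (by positivity))]
  field_simp
  linear_combination (-N ^ 2) * sin_sq_add_cos_sq θ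

lemma cos_le_pi_div_two_sub {θ : ℝ} (h : θ ≤ π / 2) : cos θ ≤ π / 2 - θ := by
  simpa [sin_pi_div_two_sub] using sin_le (sub_nonneg.2 h)

lemma sqrt_two_sub_sq_mul_le {N θ : ℝ} (h0 : 0 < N) (h1 : N < 1) (hθ : θ ∈ Icc 0 (π / 2)) :
    √(2 - N ^ 2 * (1 + sin θ ^ 2)) ≤ N * (delta N + π / 2 - θ) := by
  have hδ := delta_pos h0 h1
  have hcos : 0 ≤ cos θ := cos_nonneg_of_mem_Icc ⟨by linarith [hθ.1, pi_pos], hθ.2⟩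
  have hcos_le := cos_le_pi_div_two_sub hθ.2
  rw [sqrt_le_left (mul_nonneg h0.le (by linarith [hθ.2])), two_sub_sq_mul_eq h0 h1, mul_pow]
  gcongr
  nlinarith

lemma integral_inv_sub {b c : ℝ} (hc : 0 < c) (hbc : b < c) :
    ∫ x in (0:ℝ)..b, (c - x)⁻¹ = log (c / (c - b)) := by
  rw [intervalIntegral.integral_comp_sub_left (fun x => x⁻¹), sub_zero,
    integral_inv (notMem_uIcc_of_lt (by linarith) hc)]

lemma inv_mul_log_le_g {N : ℝ} (h0 : 0 < N) (h1 : N < 1) :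
    N⁻¹ * log ((delta N + π / 2) / delta N) ≤ g N := by
  have hδ := delta_pos h0 h1
  have hrad : ∀ θ, 0 < 2 - N ^ 2 * (1 + sin θ ^ 2) := fun θ => by
    rw [two_sub_sq_mul_eq h0 h1]; positivity
  have hg_int : IntervalIntegrable (fun θ => 1 / √(2 - N ^ 2 * (1 + sin θ ^ 2))) volume 0 (π / 2) :=
    (continuous_const.div (by fun_prop) fun θ => (sqrt_pos.2 (hrad θ)).ne').intervalIntegrable _ _
  have hlow_int : IntervalIntegrable (fun θ => N⁻¹ * (delta N + π / 2 - θ)⁻¹) volume 0 (π / 2) := by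
    refine ContinuousOn.intervalIntegrable ?_
    rw [uIcc_of_le (by positivity)]
    exact continuousOn_const.mul <| ContinuousOn.inv₀ (by fun_prop)
      fun θ hθ => (by linarith [hθ.2] : 0 < delta N + π / 2 - θ).ne'
  calc N⁻¹ * log ((delta N + π / 2) / delta N)
      = ∫ θ in (0:ℝ)..π / 2, N⁻¹ * (delta N + π / 2 - θ)⁻¹ := by
        rw [intervalIntegral.integral_const_mul, integral_inv_sub (by positivity) (by linarith),
          add_sub_cancel_right]
    _ ≤ g N := by
        refine intervalIntegral.integral_mono_on (by positivity) hlow_int hg_int fun θ hθ => ?_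
        rw [← mul_inv, one_div]
        exact inv_anti₀ (sqrt_pos.2 (hrad θ)) (sqrt_two_sub_sq_mul_le h0 h1 hθ)

lemma neg_log_delta_lt_g {N : ℝ} (h0 : 0 < N) (h1 : N < 1) : -log (delta N) < g N := by
  have hδ := delta_pos h0 h1
  have hlog_add : 0 < log (delta N + π / 2) := log_pos (by linarith [pi_gt_three])
  have hlog_div : log ((delta N + π / 2) / delta N) = log (delta N + π / 2) - log (delta N) :=
    log_div (by positivity) hδ.ne'
  have hN_inv : 1 < N⁻¹ := one_lt_inv₀ h0 |>.2 h1
  have hratio : 0 < log ((delta N + π / 2) / delta N) :=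
    log_pos ((one_lt_div hδ).2 (by linarith [pi_pos]))
  calc -log (delta N) < log ((delta N + π / 2) / delta N) := by linarith
    _ ≤ N⁻¹ * log ((delta N + π / 2) / delta N) := le_mul_of_one_le_left hratio.le hN_inv.le
    _ ≤ g N := inv_mul_log_le_g h0 h1

theorem g_tendsto_atTop_and_lower_bound :
    Filter.Tendsto g (nhdsWithin 1 (Set.Iio 1)) Filter.atTop ∧
    ∀ N : ℝ, Real.sqrt (2 / 3) < N → N < 1 →
      Real.sqrt ((2 - 2 * N ^ 2) / N ^ 2) < 1 ∧
      -(1 / (Real.sqrt 2 * N)) * Real.log (Real.sqrt ((2 - 2 * N ^ 2) / N ^ 2)) < g N := by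
  refine ⟨?_, fun N hN h1 => ⟨delta_lt_one hN, ?_⟩⟩
  · have h_neg_log : Tendsto (fun N => -log (delta N)) (𝓝[<] 1) atTop :=
      tendsto_neg_atBot_atTop.comp (tendsto_log_nhdsGT_zero.comp tendsto_delta_nhdsLT_one)
    refine tendsto_atTop_mono' _ ?_ h_neg_log
    filter_upwards [Ioo_mem_nhdsLT zero_lt_one] with N hN
    exact (neg_log_delta_lt_g hN.1 hN.2).le
  · have h0 : 0 < N := (sqrt_nonneg _).trans_lt hN
    have hlog : log (delta N) < 0 := log_neg (delta_pos h0 h1) (delta_lt_one hN)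
    have hcoef : 1 / (√2 * N) ≤ 1 := by
      have hN2 : 2 / 3 < N ^ 2 := (sqrt_lt' h0).1 hN
      rw [div_le_one (by positivity)]
      nlinarith [sq_sqrt (zero_le_two : (0:ℝ) ≤ 2), sqrt_nonneg 2]
    calc -(1 / (√2 * N)) * log (delta N) ≤ -log (delta N) := by nlinarith
      _ < g N := neg_log_delta_lt_g h0 h1
end

section
/- For N ∈ (√(2/3), 1), the function g satisfies the upper bound g(N) < π/(2N) - (π/(2√2 N)) log δ, where δ = √((2-2N²)/N²). -/
open MeasureTheory

/-- chord bound for sin on `[0, π/4]`. -/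
lemma sin_chord {u : ℝ} (h0 : 0 ≤ u) (h1 : u ≤ Real.pi/4) :
    2*Real.sqrt 2/Real.pi * u ≤ Real.sin u := by
  have hπ := Real.pi_pos
  have hc := strictConcaveOn_sin_Icc.concaveOn
  have ha : (0:ℝ) ∈ Set.Icc (0:ℝ) Real.pi := by constructor <;> linarith
  have hb : Real.pi/4 ∈ Set.Icc (0:ℝ) Real.pi := by constructor <;> linarith
  have ht1 : (0:ℝ) ≤ 1 - 4*u/Real.pi := by
    rw [sub_nonneg, div_le_one hπ]; linarith
  have ht2 : (0:ℝ) ≤ 4*u/Real.pi := by positivity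
  have h := hc.2 ha hb ht1 ht2 (by ring)
  simp only [smul_eq_mul, Real.sin_zero, mul_zero, zero_add] at h
  rw [show 4*u/Real.pi * (Real.pi/4) = u by field_simp, Real.sin_pi_div_four] at h
  calc 2*Real.sqrt 2/Real.pi * u = 4*u/Real.pi * (Real.sqrt 2/2) := by ring
  _ ≤ Real.sin u := h

set_option maxHeartbeats 2000000 in
theorem g_upper_bound :
    ∀ N : ℝ, Real.sqrt (2 / 3) < N → N < 1 →
      g N < Real.pi / (2 * N)
        - Real.pi / (2 * Real.sqrt 2 * N) * Real.log (Real.sqrt ((2 - 2 * N ^ 2) / N ^ 2)) := by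
  intro N hNl hNu
  have hπ := Real.pi_pos
  have hN0 : 0 < N := lt_of_le_of_lt (Real.sqrt_nonneg _) hNl
  have hN23 : 2/3 < N^2 := (Real.sqrt_lt' hN0).mp hNl
  have hN1 : N^2 < 1 := by nlinarith
  have hnum : 0 < 2 - 2*N^2 := by nlinarith
  have hsqrt2 : Real.sqrt 2^2 = 2 := Real.sq_sqrt (by norm_num)
  have hsqrt2pos : 0 < Real.sqrt 2 := Real.sqrt_pos.mpr (by norm_num)
  set δ := Real.sqrt ((2 - 2 * N ^ 2) / N ^ 2) with hδdef
  have hδpos : 0 < δ := Real.sqrt_pos.mpr (by positivity)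
  have hδsq : δ^2 = (2 - 2*N^2)/N^2 := Real.sq_sqrt (by positivity)
  have hδ1 : δ < 1 := by
    rw [hδdef, Real.sqrt_lt' one_pos, div_lt_iff₀ (by positivity)]
    nlinarith
  have hNδ : N^2 * δ^2 = 2 - 2*N^2 := by
    rw [hδsq]; field_simp
  have hiden : ∀ θ : ℝ, 2 - N^2*(1 + Real.sin θ^2) = N^2*(δ^2 + Real.cos θ^2) := by
    intro θ
    have h := Real.sin_sq_add_cos_sq θ
    nlinarith [hNδ]
  have hDpos : ∀ θ : ℝ, 0 < 2 - N^2*(1 + Real.sin θ^2) := by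
    intro θ; nlinarith [Real.sin_sq_le_one θ]
  set F : ℝ → ℝ := fun θ => 1 / Real.sqrt (2 - N ^ 2 * (1 + Real.sin θ ^ 2)) with hF
  have hFcont : Continuous F := by
    apply continuous_const.div
    · exact Real.continuous_sqrt.comp (by fun_prop)
    · intro θ; exact (Real.sqrt_pos.mpr (hDpos θ)).ne'
  set s := Real.sqrt (δ^2 + 1/2) with hsdef
  have hs0 : 0 < s := Real.sqrt_pos.mpr (by positivity)
  have hssq : s^2 = δ^2 + 1/2 := Real.sq_sqrt (by positivity)
  -- Part A : ∫_0^{π/4} F ≤ π/4 * (1/(N*s))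
  have hA : (∫ θ in (0:ℝ)..(Real.pi/4), F θ) ≤ Real.pi/4 * (1/(N*s)) := by
    have hmono := intervalIntegral.integral_mono_on (a := (0:ℝ)) (b := Real.pi/4)
      (μ := volume) (f := F) (g := fun _ => 1/(N*s)) (by positivity)
      (hFcont.intervalIntegrable _ _) intervalIntegrable_const ?_
    · rw [intervalIntegral.integral_const, smul_eq_mul, sub_zero] at hmono
      exact hmono
    · intro θ hθ
      have hcos : Real.sqrt 2/2 ≤ Real.cos θ := by
        have := Real.cos_le_cos_of_nonneg_of_le_pi hθ.1 (by linarith) hθ.2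
        rwa [Real.cos_pi_div_four] at this
      have h2 : (N*s)^2 ≤ 2 - N^2*(1 + Real.sin θ^2) := by
        have h := Real.sin_sq_add_cos_sq θ
        nlinarith [hssq, hNδ, sq_nonneg (Real.cos θ - Real.sqrt 2/2), sq_nonneg N]
      have h3 : N*s ≤ Real.sqrt (2 - N^2*(1 + Real.sin θ^2)) :=
        (Real.le_sqrt (by positivity) (hDpos θ).le).mpr h2
      show 1 / Real.sqrt (2 - N ^ 2 * (1 + Real.sin θ ^ 2)) ≤ 1/(N*s)
      exact one_div_le_one_div_of_le (by positivity) h3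
  -- Part B
  set c2 := 2*Real.sqrt 2/(Real.pi*δ) with hc2def
  have hc2pos : 0 < c2 := by
    apply div_pos (by positivity) (by positivity)
  set c1 := Real.pi / (2 * Real.sqrt 2 * N) with hc1def
  have hc1pos : 0 < c1 := by
    apply div_pos hπ (by positivity)
  have hsq1pos : ∀ x : ℝ, 0 < Real.sqrt (1 + x^2) :=
    fun x => Real.sqrt_pos.mpr (by positivity)
  set E : ℝ → ℝ := fun θ => 1/(N*δ*Real.sqrt (1 + (c2*(Real.pi/2 - θ))^2)) with hE
  have hEcont : Continuous E := by
    apply continuous_const.div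
    · exact continuous_const.mul (Real.continuous_sqrt.comp (by fun_prop))
    · intro θ; exact (mul_pos (mul_pos hN0 hδpos) (hsq1pos _)).ne'
  set Φ : ℝ → ℝ := fun θ => -c1 * Real.arsinh (c2*(Real.pi/2 - θ)) with hΦ
  have hderiv : ∀ θ : ℝ, HasDerivAt Φ (E θ) θ := by
    intro θ
    have h1 : HasDerivAt (fun x : ℝ => c2*(Real.pi/2 - x)) (-c2) θ := by
      simpa using ((hasDerivAt_id θ).const_sub (Real.pi/2)).const_mul c2
    have h2 := (Real.hasDerivAt_arsinh (c2*(Real.pi/2 - θ))).comp θ h1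
    have h3 := h2.const_mul (-c1)
    have he : E θ = -c1 * ((Real.sqrt (1 + (c2*(Real.pi/2 - θ))^2))⁻¹ * -c2) := by
      show (1:ℝ)/(N*δ*Real.sqrt (1 + (c2*(Real.pi/2 - θ))^2))
          = -c1 * ((Real.sqrt (1 + (c2*(Real.pi/2 - θ))^2))⁻¹ * -c2)
      set X := Real.sqrt (1 + (c2*(Real.pi/2 - θ))^2) with hXdef
      have hX : 0 < X := hsq1pos _
      rw [hc1def, hc2def]
      field_simp
    rw [he]
    exact h3
  have hEint : IntervalIntegrable E volume (Real.pi/4) (Real.pi/2) :=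
    hEcont.intervalIntegrable _ _
  have hBval : (∫ θ in (Real.pi/4)..(Real.pi/2), E θ)
      = c1 * Real.arsinh (Real.sqrt 2/(2*δ)) := by
    rw [intervalIntegral.integral_eq_sub_of_hasDerivAt (fun θ _ => hderiv θ) hEint, hΦ]
    have e1 : c2*(Real.pi/2 - Real.pi/2) = 0 := by ring
    have e2 : c2*(Real.pi/2 - Real.pi/4) = Real.sqrt 2/(2*δ) := by
      rw [hc2def]; field_simp; ring
    simp only [e1, e2, Real.arsinh_zero]
    ring
  have harsinh : Real.arsinh (Real.sqrt 2/(2*δ))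
      = Real.log (Real.sqrt 2/2 + s) - Real.log δ := by
    rw [Real.arsinh]
    have h1 : 1 + (Real.sqrt 2/(2*δ))^2 = (s/δ)^2 := by
      rw [div_pow, div_pow, hssq, hsqrt2]
      field_simp
    rw [h1, Real.sqrt_sq (by positivity)]
    rw [show Real.sqrt 2/(2*δ) + s/δ = (Real.sqrt 2/2 + s)/δ by field_simp]
    exact Real.log_div (by positivity : (0:ℝ) < Real.sqrt 2/2 + s).ne' hδpos.ne'
  have hB : (∫ θ in (Real.pi/4)..(Real.pi/2), F θ)
      ≤ c1 * (Real.log (Real.sqrt 2/2 + s) - Real.log δ) := by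
    rw [← harsinh, ← hBval]
    apply intervalIntegral.integral_mono_on (by linarith) (hFcont.intervalIntegrable _ _) hEint
    intro θ hθ
    have hu0 : 0 ≤ Real.pi/2 - θ := by linarith [hθ.2]
    have hu1 : Real.pi/2 - θ ≤ Real.pi/4 := by linarith [hθ.1]
    have hcos : 2*Real.sqrt 2/Real.pi * (Real.pi/2 - θ) ≤ Real.cos θ := by
      have := sin_chord hu0 hu1
      rwa [Real.sin_pi_div_two_sub] at this
    have hcos2 : (2*Real.sqrt 2/Real.pi * (Real.pi/2 - θ))^2 ≤ Real.cos θ^2 :=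
      pow_le_pow_left₀ (by positivity) hcos 2
    have e2 : δ^2*(c2*(Real.pi/2 - θ))^2 = (2*Real.sqrt 2/Real.pi*(Real.pi/2 - θ))^2 := by
      have hc2δ : c2*δ = 2*Real.sqrt 2/Real.pi := by
        rw [hc2def]; field_simp
      calc δ^2*(c2*(Real.pi/2 - θ))^2 = ((c2*δ)*(Real.pi/2 - θ))^2 := by ring
      _ = (2*Real.sqrt 2/Real.pi*(Real.pi/2 - θ))^2 := by rw [hc2δ]
    have hkey : N*δ*Real.sqrt (1 + (c2*(Real.pi/2 - θ))^2)
        ≤ Real.sqrt (2 - N^2*(1 + Real.sin θ^2)) := by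
      rw [Real.le_sqrt (by positivity) (hDpos θ).le, hiden θ, mul_pow, mul_pow,
        Real.sq_sqrt (by positivity : (0:ℝ) ≤ 1 + (c2*(Real.pi/2 - θ))^2)]
      nlinarith [hcos2, e2, sq_nonneg N]
    show 1 / Real.sqrt (2 - N ^ 2 * (1 + Real.sin θ ^ 2))
        ≤ 1/(N*δ*Real.sqrt (1 + (c2*(Real.pi/2 - θ))^2))
    exact one_div_le_one_div_of_le (by positivity) hkey
  -- split
  have hsplit : g N = (∫ θ in (0:ℝ)..(Real.pi/4), F θ)
      + ∫ θ in (Real.pi/4)..(Real.pi/2), F θ :=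
    (intervalIntegral.integral_add_adjacent_intervals
      (hFcont.intervalIntegrable _ _) (hFcont.intervalIntegrable _ _)).symm
  -- final elementary inequality
  have hsge : Real.sqrt 2/2 ≤ s := by
    nlinarith [hssq, hs0, hsqrt2, hsqrt2pos, mul_pos hδpos hδpos]
  have hsle : s ≤ Real.sqrt 2 := by
    nlinarith [hssq, hs0, hsqrt2, hsqrt2pos, hδ1, hδpos]
  have hsum : 1/s + s ≤ 3*Real.sqrt 2/2 := by
    rw [div_add' _ _ _ hs0.ne', div_le_div_iff₀ hs0 (by norm_num : (0:ℝ) < 2)]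
    nlinarith [hsge, hsle, hsqrt2]
  have hlog : Real.log (Real.sqrt 2/2 + s) ≤ 1/2*Real.log 2 + s*Real.sqrt 2/2 - 1/2 := by
    have hx : (0:ℝ) < Real.sqrt 2/2 + s := by positivity
    have h1 := Real.log_le_sub_one_of_pos (div_pos hx hsqrt2pos)
    rw [Real.log_div hx.ne' hsqrt2pos.ne'] at h1
    have hlogs : Real.log (Real.sqrt 2) = 1/2*Real.log 2 := by
      rw [Real.log_sqrt (by norm_num)]; ring
    have hdiv2 : (Real.sqrt 2/2 + s)/Real.sqrt 2 = 1/2 + s*Real.sqrt 2/2 := by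
      rw [div_eq_iff hsqrt2pos.ne']
      nlinarith [hsqrt2]
    rw [hlogs, hdiv2] at h1
    linarith
  have hmain3 : 1/4*(1/s) + Real.sqrt 2/4*Real.log (Real.sqrt 2/2 + s) < 1/2 := by
    have hlogm : Real.sqrt 2/4*Real.log (Real.sqrt 2/2 + s)
        ≤ Real.sqrt 2/4*(1/2*Real.log 2 + s*Real.sqrt 2/2 - 1/2) :=
      mul_le_mul_of_nonneg_left hlog (by positivity)
    nlinarith [hlogm, hsum, hsqrt2, Real.log_two_lt_d9, Real.log_two_gt_d9, hs0,
      hsqrt2pos, sq_nonneg (Real.sqrt 2 - 1.4143)]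
  have hmain : Real.pi/4*(1/s) + Real.pi/(2*Real.sqrt 2)*Real.log (Real.sqrt 2/2 + s)
      < Real.pi/2 := by
    have h := mul_lt_mul_of_pos_left hmain3 hπ
    have e : Real.pi/(2*Real.sqrt 2) = Real.pi*(Real.sqrt 2/4) := by
      rw [div_eq_iff (by positivity : (2*Real.sqrt 2 : ℝ) ≠ 0)]
      nlinarith [hsqrt2]
    rw [e]
    nlinarith [h]
  have hcore : Real.pi/4*(1/(N*s)) + c1*Real.log (Real.sqrt 2/2 + s) < Real.pi/(2*N) := by
    have hNinv : (0:ℝ) < 1/N := by positivity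
    have h := mul_lt_mul_of_pos_left hmain hNinv
    calc Real.pi/4*(1/(N*s)) + c1*Real.log (Real.sqrt 2/2 + s)
        = 1/N*(Real.pi/4*(1/s) + Real.pi/(2*Real.sqrt 2)*Real.log (Real.sqrt 2/2 + s)) := by
          rw [hc1def]; ring
      _ < 1/N*(Real.pi/2) := h
      _ = Real.pi/(2*N) := by ring
  have hfin : Real.pi/4*(1/(N*s)) + c1*(Real.log (Real.sqrt 2/2 + s) - Real.log δ)
      < Real.pi/(2*N) - c1*Real.log δ := by nlinarith [hcore]
  calc g N = (∫ θ in (0:ℝ)..(Real.pi/4), F θ) + ∫ θ in (Real.pi/4)..(Real.pi/2), F θ := hsplit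
    _ ≤ Real.pi/4*(1/(N*s)) + c1*(Real.log (Real.sqrt 2/2 + s) - Real.log δ) :=
        add_le_add hA hB
    _ < Real.pi/(2*N) - c1*Real.log δ := hfin
    _ = Real.pi/(2*N) - c1*Real.log δ := rfl
end

section
/- There exist absolute constants c₁, c₂, c₃, c₄ > 0 such that for all κ ∈ (0,1), the unique N_κ ∈ (0,1) with g(N_κ) = π/(2√2 κ) satisfies c₁ e^{-c₂/κ} < 1 - N_κ < c₃ e^{-c₄/κ}. -/
open MeasureTheory

/-!
Substituting `θ = π/2 - u`, the radicand of `g N` becomes `2(1 - N²) + N² sin² u`, which lies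
between `ε + sin² u` and `4ε + sin² u` for `ε = 1 - N`. By `2u/π ≤ sin u ≤ u` on `[0, π/2]`, the
integral of `(a² + sin² u)^{-1/2}` over `[0, π/2]` lies between `log ((π/2 + a)/a)` and
`(π/√2) log ((1 + a)/a)`. Hence `½ log (1/(4ε)) < g N < (π/√2) (½ log (1/ε) + log 2)`, and
solving `g N = π/(2√2κ)` for `ε` gives `e^{-π/(√2κ)}/4 < ε < 4 e^{-1/κ}`.
-/

open Real Set

lemma intervalIntegrable_one_div_sqrt {f : ℝ → ℝ} (hf : Continuous f) (hpos : ∀ x, 0 < f x)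
    (a b : ℝ) : IntervalIntegrable (fun x ↦ 1 / √(f x)) volume a b :=
  (continuous_const.div (continuous_sqrt.comp hf)
    fun x ↦ (sqrt_pos.2 (hpos x)).ne').intervalIntegrable a b

lemma intervalIntegrable_one_div_mul_add {a c L : ℝ} (ha : 0 < a) (hc : 0 ≤ c) (hL : 0 ≤ L) :
    IntervalIntegrable (fun u ↦ 1 / (c * u + a)) volume 0 L :=
  (continuousOn_const.div (by fun_prop) fun u hu ↦ by
    rw [uIcc_of_le hL] at hu; nlinarith [hu.1]).intervalIntegrable

lemma integral_one_div_mul_add {a c L : ℝ} (ha : 0 < a) (hc : 0 < c) (hL : 0 ≤ L) :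
    ∫ u in (0:ℝ)..L, 1 / (c * u + a) = log ((c * L + a) / a) / c := by
  rw [intervalIntegral.integral_comp_mul_add (fun x ↦ 1 / x) hc.ne', integral_one_div,
    mul_zero, zero_add, smul_eq_mul, inv_mul_eq_div]
  rw [uIcc_of_le (by nlinarith)]
  exact fun h ↦ ha.not_ge (by simpa using h.1)

lemma g_eq_integral (N : ℝ) :
    g N = ∫ u in (0:ℝ)..π / 2, 1 / √(2 * (1 - N ^ 2) + N ^ 2 * sin u ^ 2) := by
  have h := intervalIntegral.integral_comp_sub_left
    (fun θ ↦ 1 / √(2 - N ^ 2 * (1 + sin θ ^ 2))) (a := 0) (b := π / 2) (π / 2)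
  simp only [sub_self, sub_zero, sin_pi_div_two_sub] at h
  rw [g, ← h]
  congr 1 with u
  congr 2
  linear_combination (-N ^ 2) * sin_sq_add_cos_sq u

lemma integral_one_div_sqrt_anti {f h : ℝ → ℝ} (hf : Continuous f) (hh : Continuous h)
    (hf_pos : ∀ x, 0 < f x) (hfh : ∀ x, f x ≤ h x) {a b : ℝ} (hab : a ≤ b) :
    ∫ x in a..b, 1 / √(h x) ≤ ∫ x in a..b, 1 / √(f x) :=
  intervalIntegral.integral_mono hab
    (intervalIntegrable_one_div_sqrt hh (fun x ↦ (hf_pos x).trans_le (hfh x)) a b)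
    (intervalIntegrable_one_div_sqrt hf hf_pos a b)
    fun x ↦ one_div_le_one_div_of_le (sqrt_pos.2 (hf_pos x)) (sqrt_le_sqrt (hfh x))

lemma one_sub_add_sin_sq_le {N : ℝ} (hN0 : 0 ≤ N) (hN1 : N ≤ 1) (u : ℝ) :
    (1 - N) + sin u ^ 2 ≤ 2 * (1 - N ^ 2) + N ^ 2 * sin u ^ 2 := by
  have hN2 : 0 ≤ 1 - N ^ 2 := by nlinarith
  nlinarith [mul_le_mul_of_nonneg_left (sin_sq_le_one u) hN2, mul_nonneg (sub_nonneg.2 hN1) hN0]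

lemma le_four_mul_one_sub_add_sin_sq {N : ℝ} (hN0 : 0 ≤ N) (hN1 : N ≤ 1) (u : ℝ) :
    2 * (1 - N ^ 2) + N ^ 2 * sin u ^ 2 ≤ 4 * (1 - N) + sin u ^ 2 := by
  have hN2 : 0 ≤ 1 - N ^ 2 := by nlinarith
  nlinarith [sq_nonneg (1 - N), mul_nonneg hN2 (sq_nonneg (sin u))]

lemma g_le_integral {N : ℝ} (hN0 : 0 ≤ N) (hN1 : N < 1) :
    g N ≤ ∫ u in (0:ℝ)..π / 2, 1 / √(√(1 - N) ^ 2 + sin u ^ 2) := by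
  rw [g_eq_integral, sq_sqrt (by linarith)]
  exact integral_one_div_sqrt_anti (by fun_prop) (by fun_prop)
    (fun u ↦ by positivity [sub_pos.2 hN1]) (one_sub_add_sin_sq_le hN0 hN1.le) (by positivity)

lemma integral_le_g {N : ℝ} (hN0 : 0 ≤ N) (hN1 : N < 1) :
    ∫ u in (0:ℝ)..π / 2, 1 / √((2 * √(1 - N)) ^ 2 + sin u ^ 2) ≤ g N := by
  rw [g_eq_integral, mul_pow, sq_sqrt (by linarith)]
  norm_num only
  refine integral_one_div_sqrt_anti (by fun_prop) (by fun_prop) (fun u ↦ ?_)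
    (le_four_mul_one_sub_add_sin_sq hN0 hN1.le) (by positivity)
  linarith [one_sub_add_sin_sq_le hN0 hN1.le u, sq_nonneg (sin u)]

lemma integral_one_div_sqrt_sq_add_sin_sq_le {a : ℝ} (ha : 0 < a) :
    ∫ u in (0:ℝ)..π / 2, 1 / √(a ^ 2 + sin u ^ 2) ≤ √2 * (π / 2) * log ((1 + a) / a) := by
  have hc : 0 < 2 / π := by positivity
  -- Jordan's inequality `sin u ≥ 2u/π` and `(x + y)² ≤ 2(x² + y²)`
  have hpt : ∀ u ∈ Icc 0 (π / 2), 1 / √(a ^ 2 + sin u ^ 2) ≤ √2 * (1 / (2 / π * u + a)) := by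
    rintro u ⟨hu0, hu1⟩
    have hjordan := mul_le_sin hu0 hu1
    have hv : 0 ≤ 2 / π * u := by positivity
    rw [mul_one_div, ← one_div_div (2 / π * u + a)]
    refine one_div_le_one_div_of_le (by positivity) ?_
    rw [le_sqrt (by positivity) (by positivity), div_pow, sq_sqrt zero_le_two]
    nlinarith [sq_nonneg (2 / π * u - a), pow_le_pow_left₀ hv hjordan 2]
  calc ∫ u in (0:ℝ)..π / 2, 1 / √(a ^ 2 + sin u ^ 2)
      ≤ ∫ u in (0:ℝ)..π / 2, √2 * (1 / (2 / π * u + a)) :=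
        intervalIntegral.integral_mono_on (by positivity)
          (intervalIntegrable_one_div_sqrt (by fun_prop) (fun u ↦ by positivity) _ _)
          ((intervalIntegrable_one_div_mul_add ha hc.le (by positivity)).const_mul _) hpt
    _ = √2 * (π / 2) * log ((1 + a) / a) := by
        rw [intervalIntegral.integral_const_mul, integral_one_div_mul_add ha hc (by positivity)]
        field_simp

lemma log_le_integral_one_div_sqrt_sq_add_sin_sq {a : ℝ} (ha : 0 < a) :
    log ((π / 2 + a) / a) ≤ ∫ u in (0:ℝ)..π / 2, 1 / √(a ^ 2 + sin u ^ 2) := by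
  have hpt : ∀ u ∈ Icc 0 (π / 2), 1 / (1 * u + a) ≤ 1 / √(a ^ 2 + sin u ^ 2) := by
    rintro u ⟨hu0, -⟩
    refine one_div_le_one_div_of_le (by positivity) ((sqrt_le_left (by positivity)).2 ?_)
    nlinarith [sin_sq_le_sq (x := u)]
  calc log ((π / 2 + a) / a) = ∫ u in (0:ℝ)..π / 2, 1 / (1 * u + a) := by
        rw [integral_one_div_mul_add ha one_pos (by positivity), one_mul, div_one]
    _ ≤ _ := intervalIntegral.integral_mono_on (by positivity)
          (intervalIntegrable_one_div_mul_add ha zero_le_one (by positivity))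
          (intervalIntegrable_one_div_sqrt (by fun_prop) (fun u ↦ by positivity) _ _) hpt

lemma exp_neg_two_mul_log_div {x y : ℝ} (hx : 0 < x) (hy : 0 < y) :
    exp (-(2 * log (x / y))) = (y / x) ^ 2 := by
  rw [← exp_log (by positivity : 0 < (y / x) ^ 2), log_pow, ← inv_div, log_inv]
  push_cast
  ring_nf

lemma one_sub_lt_four_mul_exp_neg_g {N : ℝ} (hN0 : 0 < N) (hN1 : N < 1) :
    1 - N < 4 * exp (-(2 * √2 / π * g N)) := by
  set a := √(1 - N)
  have ha : 0 < a := sqrt_pos.2 (by linarith)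
  have ha1 : a < 1 := (sqrt_lt' one_pos).2 (by linarith)
  have hg : g N ≤ √2 * (π / 2) * log ((1 + a) / a) :=
    (g_le_integral hN0.le hN1).trans (integral_one_div_sqrt_sq_add_sin_sq_le ha)
  have hgL : 2 * √2 / π * g N ≤ 2 * log ((1 + a) / a) := by
    calc 2 * √2 / π * g N ≤ 2 * √2 / π * (√2 * (π / 2) * log ((1 + a) / a)) := by gcongr
      _ = 2 * log ((1 + a) / a) := by field_simp; rw [sq_sqrt zero_le_two]
  calc 1 - N = a ^ 2 := (sq_sqrt (by linarith)).symm
    _ < 4 * (a / (1 + a)) ^ 2 := by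
        rw [div_pow, mul_div_assoc', lt_div_iff₀ (by positivity)]
        nlinarith [mul_pos (pow_pos ha 2) (by nlinarith : 0 < 4 - (1 + a) ^ 2)]
    _ = 4 * exp (-(2 * log ((1 + a) / a))) := by rw [exp_neg_two_mul_log_div (by positivity) ha]
    _ ≤ 4 * exp (-(2 * √2 / π * g N)) := by gcongr

lemma exp_neg_two_mul_g_div_four_lt {N : ℝ} (hN0 : 0 ≤ N) (hN1 : N < 1) :
    exp (-(2 * g N)) / 4 < 1 - N := by
  set b := 2 * √(1 - N)
  have hb : 0 < b := by positivity [sqrt_pos.2 (sub_pos.2 hN1)]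
  have hg : log ((π / 2 + b) / b) ≤ g N :=
    (log_le_integral_one_div_sqrt_sq_add_sin_sq hb).trans (integral_le_g hN0 hN1)
  have hπ : 1 < π / 2 + b := by linarith [pi_gt_three]
  calc exp (-(2 * g N)) / 4 ≤ exp (-(2 * log ((π / 2 + b) / b))) / 4 := by gcongr
    _ = (b / (π / 2 + b)) ^ 2 / 4 := by rw [exp_neg_two_mul_log_div (by positivity) hb]
    _ < b ^ 2 / 4 := by gcongr; exact div_lt_self hb hπ
    _ = 1 - N := by rw [mul_pow, sq_sqrt (by linarith)]; ring

theorem N_kappa_exponential_bounds :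
    ∃ c₁ c₂ c₃ c₄ : ℝ, 0 < c₁ ∧ 0 < c₂ ∧ 0 < c₃ ∧ 0 < c₄ ∧
      ∀ κ N : ℝ, 0 < κ → κ < 1 → N ∈ Set.Ioo (0:ℝ) 1 →
        g N = Real.pi / (2 * Real.sqrt 2 * κ) →
        c₁ * Real.exp (-c₂ / κ) < 1 - N ∧ 1 - N < c₃ * Real.exp (-c₄ / κ) := by
  refine ⟨1 / 4, π / √2, 4, 1, by norm_num, by positivity, by norm_num, one_pos, ?_⟩
  rintro κ N hκ - ⟨hN0, hN1⟩ hg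
  constructor
  · convert exp_neg_two_mul_g_div_four_lt hN0.le hN1 using 1
    rw [hg]
    field_simp
  · convert one_sub_lt_four_mul_exp_neg_g hN0 hN1 using 3
    rw [hg]
    field_simp
end

section
/- Let u be a bounded C² solution of κ²u'' + u - u³ = 0 on ℝ, and let C be the constant value of κ²(u')² + u² - u⁴/2. Then C ≤ 1/2; i.e., if C > 1/2 no bounded solution exists. -/
/-! Since y² - y⁴/2 = 1/2 - (y² - 1)²/2 ≤ 1/2, the conservation law gives κ²(u')² ≥ C - 1/2.
If C > 1/2, then |u'| is bounded away from zero; by Darboux's theorem u' has constant sign,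
so u grows at least linearly in one direction and cannot be bounded. -/

open Filter Set

theorem not_bddAbove_range_of_le_deriv {f : ℝ → ℝ} {c : ℝ} (hc : 0 < c)
    (hf : Differentiable ℝ f) (hd : ∀ x, c ≤ deriv f x) : ¬BddAbove (range f) := by
  have hmono : Monotone fun x => f x - c * x := by
    refine monotone_of_deriv_nonneg (by fun_prop) fun x => ?_
    rw [((hf x).hasDerivAt.fun_sub ((hasDerivAt_id' x).const_mul c)).deriv, mul_one]
    linarith [hd x]
  have hlin : ∀ x, 0 ≤ x → f 0 + c * x ≤ f x := fun x hx => by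
    linarith [hmono hx]
  refine not_bddAbove_of_tendsto_atTop (l := atTop) (tendsto_atTop_mono' _ ?_
    (tendsto_atTop_add_const_left _ (f 0) (tendsto_id.const_mul_atTop hc)))
  filter_upwards [eventually_ge_atTop 0] with x hx using hlin x hx

theorem not_bounded_of_le_abs_deriv {f : ℝ → ℝ} {c : ℝ} (hc : 0 < c)
    (hf : Differentiable ℝ f) (hd : ∀ x, c ≤ |deriv f x|) : ¬∃ M, ∀ x, |f x| ≤ M := by
  rintro ⟨M, hM⟩
  have hne : ∀ x ∈ univ, deriv f x ≠ 0 := fun x _ h => by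
    have := hd x
    rw [h, abs_zero] at this
    linarith
  rcases hasDerivWithinAt_forall_lt_or_forall_gt_of_forall_ne convex_univ
    (fun x _ => (hf x).hasDerivAt.hasDerivWithinAt) hne with hneg | hpos
  · refine not_bddAbove_range_of_le_deriv hc hf.neg (fun x => ?_)
      ⟨M, forall_mem_range.2 fun x => (neg_le_abs _).trans (hM x)⟩
    have := hd x
    rw [abs_of_neg (hneg x trivial)] at this
    rwa [deriv.neg]
  · refine not_bddAbove_range_of_le_deriv hc hf (fun x => ?_)
      ⟨M, forall_mem_range.2 fun x => (le_abs_self _).trans (hM x)⟩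
    simpa only [abs_of_pos (hpos x trivial)] using hd x

theorem conserved_constant_le_half_general (κ C : ℝ) (hκ : 0 < κ) (u : ℝ → ℝ)
    (hu : ContDiff ℝ 2 u)
    (hbdd : ∃ M : ℝ, ∀ x : ℝ, |u x| ≤ M)
    (hC : ∀ x : ℝ, κ ^ 2 * (deriv u x) ^ 2 + (u x) ^ 2 - (u x) ^ 4 / 2 = C) :
    C ≤ 1 / 2 := by
  by_contra! hC_gt
  have hpotential : ∀ y : ℝ, y ^ 2 - y ^ 4 / 2 ≤ 1 / 2 := fun y => by
    nlinarith [sq_nonneg (y ^ 2 - 1)]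
  have hkinetic : ∀ x, (C - 1 / 2) / κ ^ 2 ≤ deriv u x ^ 2 := fun x => by
    rw [div_le_iff₀ (by positivity)]
    linarith [hC x, hpotential (u x)]
  refine not_bounded_of_le_abs_deriv (c := √((C - 1 / 2) / κ ^ 2)) (by positivity)
    (hu.differentiable two_ne_zero) (fun x => ?_) hbdd
  rw [← Real.sqrt_sq_eq_abs]
  exact Real.sqrt_le_sqrt (hkinetic x)

/-- If `u` is a bounded C² solution of `κ²u'' + u - u³ = 0` on ℝ with conserved
constant `C = κ²(u')² + u² - u⁴/2`, then `C ≤ 1/2`. -/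
theorem conserved_constant_le_half (κ C : ℝ) (hκ : 0 < κ) (u : ℝ → ℝ)
    (hu : ContDiff ℝ 2 u)
    (hbdd : ∃ M : ℝ, ∀ x : ℝ, |u x| ≤ M)
    (heq : ∀ x : ℝ, κ ^ 2 * deriv (deriv u) x + u x - (u x) ^ 3 = 0)
    (hC : ∀ x : ℝ, κ ^ 2 * (deriv u x) ^ 2 + (u x) ^ 2 - (u x) ^ 4 / 2 = C) :
    C ≤ 1 / 2 :=
  conserved_constant_le_half_general κ C hκ u hu hbdd hC
end

section
/- Let u be a bounded C² solution of κ²u'' + u - u³ = 0 on ℝ whose conserved constant C = κ²(u')² + u² - u⁴/2 equals 0. Then u ≡ 0. -/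
/-!
Vanishing energy gives `κ²u'² = u²(u² - 2)/2`, so at every point `u = 0` or `u² ≥ 2`. A continuous
function cannot jump across this gap, so a solution that is nonzero somewhere has a fixed sign,
and since the equation is odd in `u` we may take `u ≥ 1`, hence `u² ≥ 2`, everywhere. Then
`κ²u'' = u(u² - 1) ≥ 1`, and a function whose second derivative is bounded below by a positive
constant is unbounded.
-/

open Set

theorem not_bddAbove_range_of_le_deriv_deriv {f : ℝ → ℝ} {c : ℝ} (hf : Differentiable ℝ f)
    (hf' : Differentiable ℝ (deriv f)) (hc : 0 < c) (h : ∀ x, c ≤ deriv (deriv f) x) :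
    ¬BddAbove (range f) := by
  rintro ⟨M, hM⟩
  set x := |1 - deriv f 0| / c
  have hx : 1 ≤ deriv f x := by
    have hgrowth := mul_sub_le_image_sub_of_le_deriv hf' h (show 0 ≤ x by positivity)
    rw [sub_zero, mul_div_cancel₀ _ hc.ne'] at hgrowth
    linarith [le_abs_self (1 - deriv f 0)]
  -- the tangent line at `x` has slope at least `1`, and the convex `f` lies above it
  set y := x + |M - f x| + 1
  have hxy : x < y := by linarith [abs_nonneg (M - f x)]
  have hconv : ConvexOn ℝ univ f :=
    convexOn_univ_of_deriv2_nonneg hf hf' fun x => hc.le.trans (h x)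
  have hslope : deriv f x ≤ slope f x y := hconv.deriv_le_slope trivial trivial hxy (hf x)
  rw [slope_def_field, le_div_iff₀ (sub_pos.2 hxy)] at hslope
  nlinarith [hM (mem_range_self y), le_abs_self (M - f x)]

theorem Continuous.forall_le_of_forall_notMem_Ioo {X α : Type*} [TopologicalSpace X]
    [PreconnectedSpace X] [LinearOrder α] [TopologicalSpace α] [OrderClosedTopology α]
    [DenselyOrdered α] {f : X → α} (hf : Continuous f) {a b : α} (hab : a < b)
    (hgap : ∀ x, f x ∉ Ioo a b) {x₀ : X} (hx₀ : b ≤ f x₀) (x : X) : b ≤ f x := by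
  by_contra! hx
  obtain ⟨c, hac, hcb⟩ := exists_between hab
  have hxa : f x ≤ a := not_lt.1 fun h => hgap x ⟨h, hx⟩
  obtain ⟨z, hz⟩ := mem_range_of_exists_le_of_exists_ge hf ⟨x, hxa.trans hac.le⟩
    ⟨x₀, hcb.le.trans hx₀⟩
  exact hgap z (hz ▸ ⟨hac, hcb⟩)

theorem eq_zero_or_two_le_sq_of_energy_eq_zero {k d y : ℝ}
    (h : k ^ 2 * d ^ 2 + y ^ 2 - y ^ 4 / 2 = 0) : y = 0 ∨ 2 ≤ y ^ 2 := by
  refine or_iff_not_imp_left.2 fun hy => ?_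
  have hy2 : 0 < y ^ 2 := by positivity
  nlinarith [sq_nonneg (k * d)]

theorem not_bddAbove_range_of_ode_of_pos {κ : ℝ} (hκ : 0 < κ) {u : ℝ → ℝ} (hu : ContDiff ℝ 2 u)
    (heq : ∀ x, κ ^ 2 * deriv (deriv u) x + u x - u x ^ 3 = 0)
    (hgap : ∀ x, u x = 0 ∨ 2 ≤ u x ^ 2) {x₀ : ℝ} (hx₀ : 0 < u x₀) : ¬BddAbove (range u) := by
  have hpos_one : ∀ x, 0 < u x → 1 ≤ u x := fun x hx =>
    by nlinarith [(hgap x).resolve_left hx.ne']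
  have hge : ∀ x, 1 ≤ u x := hu.continuous.forall_le_of_forall_notMem_Ioo one_pos
    (fun x hx => (hpos_one x hx.1).not_gt hx.2) (hpos_one x₀ hx₀)
  have hu'' : ∀ x, 1 / κ ^ 2 ≤ deriv (deriv u) x := by
    intro x
    have hsq := (hgap x).resolve_left (by linarith [hge x])
    rw [div_le_iff₀ (by positivity)]
    nlinarith [heq x, hge x, mul_nonneg (zero_le_one.trans (hge x)) (sub_nonneg.2 hsq)]
  exact not_bddAbove_range_of_le_deriv_deriv (hu.differentiable two_ne_zero)
    ((hu.iterate_deriv' 1 1).differentiable one_ne_zero) (by positivity) hu''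

/-- If `u` is a bounded C² solution of `κ²u'' + u - u³ = 0` on ℝ whose conserved
constant `κ²(u')² + u² - u⁴/2` equals `0`, then `u ≡ 0`. -/
theorem conserved_constant_zero_implies_trivial (κ : ℝ) (hκ : 0 < κ) (u : ℝ → ℝ)
    (hu : ContDiff ℝ 2 u)
    (hbdd : ∃ M : ℝ, ∀ x : ℝ, |u x| ≤ M)
    (heq : ∀ x : ℝ, κ ^ 2 * deriv (deriv u) x + u x - (u x) ^ 3 = 0)
    (hC : ∀ x : ℝ, κ ^ 2 * (deriv u x) ^ 2 + (u x) ^ 2 - (u x) ^ 4 / 2 = 0) :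
    ∀ x : ℝ, u x = 0 := by
  have hgap x : u x = 0 ∨ 2 ≤ u x ^ 2 := eq_zero_or_two_le_sq_of_energy_eq_zero (hC x)
  obtain ⟨M, hM⟩ := hbdd
  intro x
  by_contra hx
  rcases lt_or_gt_of_ne hx with hneg | hpos
  · refine not_bddAbove_range_of_ode_of_pos hκ hu.neg (fun y => ?_) (by simpa using hgap)
      (neg_pos.2 hneg) ⟨M, forall_mem_range.2 fun y => (neg_le_abs _).trans (hM y)⟩
    simp only [deriv.fun_neg']
    linear_combination -heq y
  · exact not_bddAbove_range_of_ode_of_pos hκ hu heq hgap hpos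
      ⟨M, forall_mem_range.2 fun y => (le_abs_self _).trans (hM y)⟩
end

section
/- Let u : [-π,π] → ℝ (periodic) be smooth and odd. Then ∫_{-π}^{π} u³ (-u'') dx = 3∫_{-π}^{π} (u')² u² dx = (3/4)∫_{-π}^{π} (d/dx(|u|u))² dx ≥ (3/4) ∫_{-π}^{π} u⁴ dx, where the last inequality uses the Poincaré inequality for odd periodic functions applied to |u|u. -/
open MeasureTheory intervalIntegral Real Filter Topology Set

lemma wirtinger_alg (s c v w : ℝ) (hs : s ≠ 0) (hsq : s ^ 2 + c ^ 2 = 1) :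
    w ^ 2 - v ^ 2 - (2 * v * w * (c / s) - v ^ 2 / s ^ 2) = (w - v * (c / s)) ^ 2 := by
  field_simp
  linear_combination (-(v ^ 2)) * hsq

lemma wirtinger_dirichlet {v : ℝ → ℝ} (hv : ∀ x, HasDerivAt v (deriv v x) x)
    (hv' : Continuous (deriv v)) (h0 : v 0 = 0) (hπ : v Real.pi = 0) :
    ∫ x in (0:ℝ)..Real.pi, (v x) ^ 2 ≤ ∫ x in (0:ℝ)..Real.pi, (deriv v x) ^ 2 := by
  have hvc : Continuous v := continuous_iff_continuousAt.mpr fun x => (hv x).continuousAt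
  set f : ℝ → ℝ := fun x => (deriv v x) ^ 2 - (v x) ^ 2 with hf
  have hfc : Continuous f := by fun_prop
  have hint : ∀ a b : ℝ, IntervalIntegrable f volume a b := fun a b => hfc.intervalIntegrable a b
  set F : ℝ → ℝ := fun t => ∫ x in (0:ℝ)..t, f x with hF
  have hFc : Continuous F := continuous_primitive hint 0
  set g : ℝ → ℝ := fun x => (v x) ^ 2 * (Real.cos x / Real.sin x) with hg
  -- main estimate on interior intervals
  have claimA : ∀ ε ∈ Ioo (0:ℝ) (π/2), g (π - ε) - g ε ≤ F (π - ε) - F ε := by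
    intro ε hε
    obtain ⟨hε0, hε2⟩ := hε
    have hεπ : ε ≤ π - ε := by nlinarith [Real.pi_pos]
    have hsin : ∀ x ∈ Icc ε (π - ε), Real.sin x ≠ 0 := by
      intro x hx
      exact ne_of_gt (Real.sin_pos_of_pos_of_lt_pi (lt_of_lt_of_le hε0 hx.1)
        (lt_of_le_of_lt hx.2 (by linarith)))
    set G : ℝ → ℝ := fun x =>
      2 * v x * deriv v x * (Real.cos x / Real.sin x) - (v x) ^ 2 / (Real.sin x) ^ 2 with hG
    have huIcc : uIcc ε (π - ε) = Icc ε (π - ε) := uIcc_of_le hεπ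
    have hGderiv : ∀ x ∈ uIcc ε (π - ε), HasDerivAt g (G x) x := by
      intro x hx
      rw [huIcc] at hx
      have hs := hsin x hx
      have h1 : HasDerivAt (fun y => Real.cos y / Real.sin y)
          ((-Real.sin x * Real.sin x - Real.cos x * Real.cos x) / (Real.sin x) ^ 2) x :=
        (Real.hasDerivAt_cos x).div (Real.hasDerivAt_sin x) hs
      have h2 : HasDerivAt (fun y => (v y) ^ 2) (2 * v x * deriv v x) x := by
        simpa [mul_comm, mul_assoc] using ((hv x).fun_pow 2)
      have hsq : Real.sin x ^ 2 + Real.cos x ^ 2 = 1 := Real.sin_sq_add_cos_sq x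
      have h3 : -Real.sin x * Real.sin x - Real.cos x * Real.cos x = -1 := by nlinarith
      rw [h3] at h1
      have := h2.mul h1
      refine this.congr_deriv ?_
      simp only [hG]
      ring
    have hGcont : ContinuousOn G (uIcc ε (π - ε)) := by
      rw [huIcc]
      apply ContinuousOn.sub
      · exact ((continuous_const.mul hvc).mul hv').continuousOn.mul
          (Real.continuous_cos.continuousOn.div Real.continuous_sin.continuousOn hsin)
      · exact (hvc.pow 2).continuousOn.div ((Real.continuous_sin.pow 2).continuousOn)
          (fun x hx => pow_ne_zero 2 (hsin x hx))
    have hGint : IntervalIntegrable G volume ε (π - ε) := hGcont.intervalIntegrable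
    have hGeq : ∫ x in ε..(π - ε), G x = g (π - ε) - g ε :=
      integral_eq_sub_of_hasDerivAt hGderiv hGint
    have hmono : ∫ x in ε..(π - ε), G x ≤ ∫ x in ε..(π - ε), f x := by
      apply integral_mono_on hεπ hGint (hint ε (π - ε))
      intro x hx
      have hs := hsin x hx
      have key : f x - G x = (deriv v x - v x * (Real.cos x / Real.sin x)) ^ 2 := by
        simp only [hf, hG]
        exact wirtinger_alg (Real.sin x) (Real.cos x) (v x) (deriv v x) hs
          (Real.sin_sq_add_cos_sq x)
      have h9 : 0 ≤ f x - G x := key ▸ sq_nonneg _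
      linarith
    have hFdiff : F (π - ε) - F ε = ∫ x in ε..(π - ε), f x := by
      exact integral_interval_sub_left (hint 0 (π - ε)) (hint 0 ε)
    linarith [hmono, hGeq, hFdiff]
  -- limits
  have hmem : Ioo (0:ℝ) (π/2) ∈ 𝓝[>] (0:ℝ) :=
    Ioo_mem_nhdsGT_of_mem ⟨le_refl 0, by positivity⟩
  have hsub : 𝓝[>] (0:ℝ) ≤ 𝓝[≠] (0:ℝ) :=
    nhdsWithin_mono 0 fun x hx => ne_of_gt hx
  have hπsub : Tendsto (fun ε : ℝ => π - ε) (𝓝[>] (0:ℝ)) (𝓝[≠] π) := by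
    rw [tendsto_nhdsWithin_iff]
    constructor
    · have : Tendsto (fun ε : ℝ => π - ε) (𝓝 0) (𝓝 (π - 0)) :=
        tendsto_const_nhds.sub tendsto_id
      simpa using this.mono_left nhdsWithin_le_nhds
    · filter_upwards [self_mem_nhdsWithin] with ε (hε : 0 < ε)
      simp only [mem_compl_iff, mem_singleton_iff]
      intro h
      nlinarith [h]
  have hπnhds : Tendsto (fun ε : ℝ => π - ε) (𝓝[>] (0:ℝ)) (𝓝 π) :=
    hπsub.mono_right nhdsWithin_le_nhds
  have hFlim : Tendsto (fun ε => F (π - ε) - F ε) (𝓝[>] (0:ℝ)) (𝓝 (F π)) := by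
    have h2 : Tendsto (fun ε => F (π - ε)) (𝓝[>] (0:ℝ)) (𝓝 (F π)) :=
      hFc.continuousAt.tendsto.comp hπnhds
    have h3 : Tendsto (fun ε => F ε) (𝓝[>] (0:ℝ)) (𝓝 (F 0)) :=
      hFc.continuousAt.tendsto.comp (tendsto_id.mono_left nhdsWithin_le_nhds)
    have hF0 : F 0 = 0 := integral_same
    have := h2.sub h3
    rw [hF0, sub_zero] at this
    exact this
  have hglim0 : Tendsto (fun ε => g ε) (𝓝[>] (0:ℝ)) (𝓝 0) := by
    have t1 : Tendsto (slope v 0) (𝓝[>] (0:ℝ)) (𝓝 (deriv v 0)) :=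
      (hasDerivAt_iff_tendsto_slope.mp (hv 0)).mono_left hsub
    have t2 : Tendsto (fun ε => (slope Real.sin 0 ε)⁻¹) (𝓝[>] (0:ℝ)) (𝓝 1) := by
      have : Tendsto (slope Real.sin 0) (𝓝[>] (0:ℝ)) (𝓝 (Real.cos 0)) :=
        (hasDerivAt_iff_tendsto_slope.mp (Real.hasDerivAt_sin 0)).mono_left hsub
      rw [Real.cos_zero] at this
      simpa using this.inv₀ one_ne_zero
    have t3 : Tendsto (fun ε => v ε * Real.cos ε) (𝓝[>] (0:ℝ)) (𝓝 0) := by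
      have : Tendsto (fun ε => v ε * Real.cos ε) (𝓝 (0:ℝ)) (𝓝 (v 0 * Real.cos 0)) :=
        (hvc.mul Real.continuous_cos).continuousAt.tendsto
      rw [h0, zero_mul] at this
      exact this.mono_left nhdsWithin_le_nhds
    have tS := (t1.mul t2).mul t3
    rw [mul_zero] at tS
    apply tS.congr'
    filter_upwards [Ioo_mem_nhdsGT_of_mem ⟨le_refl (0:ℝ), Real.pi_pos⟩] with ε hε
    obtain ⟨hε0, hεπ⟩ := hε
    have hsε : Real.sin ε ≠ 0 := ne_of_gt (Real.sin_pos_of_pos_of_lt_pi hε0 hεπ)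
    have hε0' : ε ≠ 0 := ne_of_gt hε0
    simp only [hg, slope_def_field, h0, Real.sin_zero]
    field_simp
    ring
  have hglimπ : Tendsto (fun ε => g (π - ε)) (𝓝[>] (0:ℝ)) (𝓝 0) := by
    have t1 : Tendsto (fun ε => slope v π (π - ε)) (𝓝[>] (0:ℝ)) (𝓝 (deriv v π)) :=
      (hasDerivAt_iff_tendsto_slope.mp (hv π)).comp hπsub
    have t2 : Tendsto (fun ε => (slope Real.sin π (π - ε))⁻¹) (𝓝[>] (0:ℝ)) (𝓝 (-1)) := by
      have : Tendsto (fun ε => slope Real.sin π (π - ε)) (𝓝[>] (0:ℝ)) (𝓝 (Real.cos π)) :=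
        (hasDerivAt_iff_tendsto_slope.mp (Real.hasDerivAt_sin π)).comp hπsub
      rw [Real.cos_pi] at this
      have h5 := this.inv₀ (by norm_num : (-1:ℝ) ≠ 0)
      norm_num at h5
      exact h5
    have t3 : Tendsto (fun ε => v (π - ε) * Real.cos (π - ε)) (𝓝[>] (0:ℝ)) (𝓝 0) := by
      have h4 : Tendsto (fun y => v y * Real.cos y) (𝓝 π) (𝓝 (v π * Real.cos π)) :=
        (hvc.mul Real.continuous_cos).continuousAt.tendsto
      rw [hπ, zero_mul] at h4
      exact h4.comp hπnhds
    have tS := (t1.mul t2).mul t3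
    rw [mul_zero] at tS
    apply tS.congr'
    filter_upwards [Ioo_mem_nhdsGT_of_mem ⟨le_refl (0:ℝ), Real.pi_pos⟩] with ε hε
    obtain ⟨hε0, hεπ⟩ := hε
    have hsε : Real.sin (π - ε) ≠ 0 := by
      rw [Real.sin_pi_sub]
      exact ne_of_gt (Real.sin_pos_of_pos_of_lt_pi hε0 hεπ)
    have hε0' : ε ≠ 0 := ne_of_gt hε0
    simp only [Function.comp, hg, slope_def_field, hπ, Real.sin_pi]
    field_simp
    have hεε : ε * ε⁻¹ = 1 := mul_inv_cancel₀ hε0'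
    linear_combination (v (π - ε) ^ 2 * Real.sin (π - ε) * Real.cos (π - ε)) * hεε
  have hglim : Tendsto (fun ε => g (π - ε) - g ε) (𝓝[>] (0:ℝ)) (𝓝 0) := by
    have := hglimπ.sub hglim0
    rwa [sub_zero] at this
  have hFπ : (0:ℝ) ≤ F π := by
    refine le_of_tendsto_of_tendsto hglim hFlim ?_
    filter_upwards [hmem] with ε hε
    exact claimA ε hε
  have hsplit : F π = (∫ x in (0:ℝ)..π, (deriv v x) ^ 2) - ∫ x in (0:ℝ)..π, (v x) ^ 2 := by
    simp only [hF, hf]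
    exact integral_sub ((hv'.pow 2).intervalIntegrable 0 π) ((hvc.pow 2).intervalIntegrable 0 π)
  linarith

lemma hasDerivAt_abs_mul {u : ℝ → ℝ} (hc : Continuous u)
    (hd : ∀ x, HasDerivAt u (deriv u x) x) (x : ℝ) :
    HasDerivAt (fun y => |u y| * u y) (2 * |u x| * deriv u x) x := by
  rcases lt_trichotomy (u x) 0 with h | h | h
  · have hev : (fun y => |u y| * u y) =ᶠ[𝓝 x] fun y => -(u y * u y) := by
      filter_upwards [hc.continuousAt.preimage_mem_nhds (Iio_mem_nhds h)] with y hy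
      have : u y < 0 := hy
      rw [abs_of_neg this]; ring
    have h1 : HasDerivAt (fun y => -(u y * u y))
        (-(deriv u x * u x + u x * deriv u x)) x := ((hd x).mul (hd x)).neg
    have h2 := h1.congr_of_eventuallyEq hev
    refine h2.congr_deriv ?_
    rw [abs_of_neg h]; ring
  · rw [hasDerivAt_iff_tendsto_slope]
    have hu0 : |u x| = 0 := by rw [h, abs_zero]
    rw [hu0]
    have t1 : Filter.Tendsto (slope u x) (nhdsWithin x {x}ᶜ) (nhds (deriv u x)) :=
      hasDerivAt_iff_tendsto_slope.mp (hd x)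
    have t2 : Filter.Tendsto (fun y => |u y|) (nhdsWithin x {x}ᶜ) (nhds 0) := by
      have := (hc.abs.continuousAt (x := x)).tendsto
      rw [show |u x| = 0 from hu0] at this
      exact this.mono_left nhdsWithin_le_nhds
    have := t2.mul t1
    rw [zero_mul] at this
    have goal : Filter.Tendsto (slope (fun y => |u y| * u y) x) (nhdsWithin x {x}ᶜ)
        (nhds 0) := by
      apply this.congr'
      filter_upwards [self_mem_nhdsWithin] with y hy
      have hyx : y - x ≠ 0 := sub_ne_zero.mpr hy
      rw [slope_def_field, slope_def_field, h, abs_zero]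
      field_simp
      ring
    simpa using goal
  · have hev : (fun y => |u y| * u y) =ᶠ[𝓝 x] fun y => u y * u y := by
      filter_upwards [hc.continuousAt.preimage_mem_nhds (Ioi_mem_nhds h)] with y hy
      have : 0 < u y := hy
      rw [abs_of_pos this]
    have h1 : HasDerivAt (fun y => u y * u y)
        (deriv u x * u x + u x * deriv u x) x := (hd x).mul (hd x)
    have h2 := h1.congr_of_eventuallyEq hev
    refine h2.congr_deriv ?_
    rw [abs_of_pos h]; ring

/-- For a smooth `2π`-periodic odd function `u` on the torus `[-π,π]`:
`∫ u³(-u'') = 3∫ (u')²u² = (3/4)∫ (d/dx(|u|u))² ≥ (3/4)∫ u⁴`. -/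
theorem odd_cubic_dissipation (u : ℝ → ℝ) (hu : ContDiff ℝ (⊤ : ℕ∞) u)
    (hper : ∀ x : ℝ, u (x + 2 * Real.pi) = u x)
    (hodd : ∀ x : ℝ, u (-x) = -u x) :
    (∫ x in (-Real.pi)..Real.pi, (u x) ^ 3 * (-(deriv (deriv u) x))) =
      3 * (∫ x in (-Real.pi)..Real.pi, (deriv u x) ^ 2 * (u x) ^ 2) ∧
    3 * (∫ x in (-Real.pi)..Real.pi, (deriv u x) ^ 2 * (u x) ^ 2) =
      (3 / 4) * (∫ x in (-Real.pi)..Real.pi, (deriv (fun y => |u y| * u y) x) ^ 2) ∧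
    (3 / 4) * (∫ x in (-Real.pi)..Real.pi, (u x) ^ 4) ≤
      (3 / 4) * (∫ x in (-Real.pi)..Real.pi, (deriv (fun y => |u y| * u y) x) ^ 2) := by
  have hcu : Continuous u := hu.continuous
  have hd : ∀ x, HasDerivAt u (deriv u x) x := fun x => (hu.differentiable (by simp) x).hasDerivAt
  have hcu' : Continuous (deriv u) := hu.continuous_deriv (by simp)
  have hone : (1 : WithTop ℕ∞) ≤ ((⊤ : ℕ∞) : WithTop ℕ∞) := by
    exact_mod_cast le_top
  have hu2 : ContDiff ℝ ((⊤ : ℕ∞) : WithTop ℕ∞) (deriv u) :=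
    (contDiff_infty_iff_deriv.mp (hu.of_le (by simp))).2
  have hd' : ∀ x, HasDerivAt (deriv u) (deriv (deriv u) x) x :=
    fun x => (hu2.differentiable (by simp) x).hasDerivAt
  have hcu'' : Continuous (deriv (deriv u)) := hu2.continuous_deriv hone
  have u0 : u 0 = 0 := by have := hodd 0; simp at this; linarith
  have hUpi : u Real.pi = u (-Real.pi) := by
    have h := hper (-Real.pi)
    rw [show -Real.pi + 2 * Real.pi = Real.pi by ring] at h
    exact h
  have uπ : u Real.pi = 0 := by have := hodd Real.pi; rw [← hUpi] at this; linarith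
  have uπ' : u (-Real.pi) = 0 := by rw [← hUpi]; exact uπ
  have hu'even : ∀ x, deriv u (-x) = deriv u x := by
    intro x
    have h1 : HasDerivAt (u ∘ fun y : ℝ => -y) (deriv u (-x) * (-1)) x :=
      (hd (-x)).comp x (hasDerivAt_neg x)
    have h1' : HasDerivAt (fun y => -u y) (deriv u (-x) * (-1)) x := by
      apply h1.congr_of_eventuallyEq
      filter_upwards with y
      simp [Function.comp, hodd y]
    have h2 : HasDerivAt (fun y => -u y) (-deriv u x) x := (hd x).neg
    have := h1'.unique h2
    linarith
  -- the auxiliary function v = |u| u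
  set v : ℝ → ℝ := fun y => |u y| * u y with hvdef
  have hvd : ∀ x, HasDerivAt v (2 * |u x| * deriv u x) x := hasDerivAt_abs_mul hcu hd
  have hvderiv : deriv v = fun x => 2 * |u x| * deriv u x := funext fun x => (hvd x).deriv
  have hvc : Continuous v := (hcu.abs.mul hcu)
  have hvc' : Continuous (deriv v) := by
    rw [hvderiv]; exact (continuous_const.mul hcu.abs).mul hcu'
  -- Part 1 : integration by parts
  have part1 : (∫ x in (-Real.pi)..Real.pi, (u x) ^ 3 * (-(deriv (deriv u) x))) =
      3 * (∫ x in (-Real.pi)..Real.pi, (deriv u x) ^ 2 * (u x) ^ 2) := by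
    have hbd : (∫ x in (-Real.pi)..Real.pi,
        (3 * u x ^ 2 * (deriv u x) ^ 2 + u x ^ 3 * deriv (deriv u) x)) = 0 := by
      have hD : ∀ x ∈ Set.uIcc (-Real.pi) Real.pi,
          HasDerivAt (fun y => u y ^ 3 * deriv u y)
            (3 * u x ^ 2 * (deriv u x) ^ 2 + u x ^ 3 * deriv (deriv u) x) x := by
        intro x _
        have := ((hd x).fun_pow 3).mul (hd' x)
        refine this.congr_deriv ?_
        push_cast
        ring
      rw [intervalIntegral.integral_eq_sub_of_hasDerivAt hD
        (Continuous.intervalIntegrable (by fun_prop) _ _)]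
      simp [uπ, uπ']
    have hptwise : ∀ x, u x ^ 3 * (-(deriv (deriv u) x)) =
        3 * ((deriv u x) ^ 2 * (u x) ^ 2) -
          (3 * u x ^ 2 * (deriv u x) ^ 2 + u x ^ 3 * deriv (deriv u) x) := by
      intro x; ring
    rw [intervalIntegral.integral_congr (fun x _ => hptwise x)]
    rw [intervalIntegral.integral_sub (Continuous.intervalIntegrable (by fun_prop) _ _)
      (Continuous.intervalIntegrable (by fun_prop) _ _), hbd, sub_zero,
      intervalIntegral.integral_const_mul]
  -- Part 2
  have part2 : 3 * (∫ x in (-Real.pi)..Real.pi, (deriv u x) ^ 2 * (u x) ^ 2) =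
      (3 / 4) * (∫ x in (-Real.pi)..Real.pi, (deriv v x) ^ 2) := by
    have h4 : (∫ x in (-Real.pi)..Real.pi, (deriv v x) ^ 2) =
        ∫ x in (-Real.pi)..Real.pi, 4 * ((deriv u x) ^ 2 * (u x) ^ 2) := by
      apply intervalIntegral.integral_congr
      intro x _
      rw [hvderiv]
      simp only [mul_pow]
      rw [sq_abs]
      ring
    rw [h4, intervalIntegral.integral_const_mul]
    ring
  -- Part 3 : Poincaré
  have hvodd : ∀ x, v (-x) = -v x := by
    intro x
    simp only [hvdef, hodd x, abs_neg]
    ring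
  have hv'even : ∀ x, deriv v (-x) = deriv v x := by
    intro x
    rw [hvderiv]
    simp only [hodd x, abs_neg, hu'even x]
  have key : (∫ x in (-Real.pi)..Real.pi, (v x) ^ 2) ≤
      ∫ x in (-Real.pi)..Real.pi, (deriv v x) ^ 2 := by
    have hw := wirtinger_dirichlet (fun x => hvderiv ▸ hvd x) hvc'
      (by simp [hvdef, u0]) (by simp [hvdef, uπ])
    have hsplit1 : (∫ x in (-Real.pi)..Real.pi, (v x) ^ 2) =
        (∫ x in (-Real.pi)..(0:ℝ), (v x) ^ 2) + ∫ x in (0:ℝ)..Real.pi, (v x) ^ 2 :=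
      (intervalIntegral.integral_add_adjacent_intervals
        ((hvc.pow 2).intervalIntegrable _ _) ((hvc.pow 2).intervalIntegrable _ _)).symm
    have hsplit2 : (∫ x in (-Real.pi)..Real.pi, (deriv v x) ^ 2) =
        (∫ x in (-Real.pi)..(0:ℝ), (deriv v x) ^ 2) +
          ∫ x in (0:ℝ)..Real.pi, (deriv v x) ^ 2 :=
      (intervalIntegral.integral_add_adjacent_intervals
        ((hvc'.pow 2).intervalIntegrable _ _) ((hvc'.pow 2).intervalIntegrable _ _)).symm
    have heven1 : (∫ x in (-Real.pi)..(0:ℝ), (v x) ^ 2) =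
        ∫ x in (0:ℝ)..Real.pi, (v x) ^ 2 := by
      have := intervalIntegral.integral_comp_neg (a := (0:ℝ)) (b := Real.pi)
        (fun x => (v x) ^ 2)
      simp only [neg_zero] at this
      rw [← this]
      apply intervalIntegral.integral_congr
      intro x _
      show v (-x) ^ 2 = v x ^ 2
      rw [hvodd x]
      ring
    have heven2 : (∫ x in (-Real.pi)..(0:ℝ), (deriv v x) ^ 2) =
        ∫ x in (0:ℝ)..Real.pi, (deriv v x) ^ 2 := by
      have := intervalIntegral.integral_comp_neg (a := (0:ℝ)) (b := Real.pi)
        (fun x => (deriv v x) ^ 2)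
      simp only [neg_zero] at this
      rw [← this]
      apply intervalIntegral.integral_congr
      intro x _
      show deriv v (-x) ^ 2 = deriv v x ^ 2
      rw [hv'even x]
    rw [hsplit1, hsplit2, heven1, heven2]
    linarith
  have hq : (∫ x in (-Real.pi)..Real.pi, (u x) ^ 4) =
      ∫ x in (-Real.pi)..Real.pi, (v x) ^ 2 := by
    apply intervalIntegral.integral_congr
    intro x _
    simp only [hvdef, mul_pow, sq_abs]
    ring
  refine ⟨part1, part2, ?_⟩
  rw [hq]
  have h34 : (0:ℝ) < 3/4 := by norm_num
  nlinarith [key]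
end

section
/- Let T₀ ≥ 1 and let θ : [T₀,∞) → [0,∞) be continuously differentiable with 0 < limsup_{t→∞} tθ(t) < ∞ and θ'(t) ≥ -(3/2)θ(t)² - t^{-2.2} for all t > T₀. Then liminf_{t→∞} tθ(t) > 0. -/
/-!
Choose `0 < c < limsup tθ(t)` small and a time `t₁` beyond which `t^{-1/5}` is tiny and at which
`t₁θ(t₁) > c`. The barrier `φ(t) = c/t - t^{-6/5}` is a strict subsolution of
`y' = -(3/2)y² - t^{-11/5}` for large `t`, while `θ` is a supersolution, so `θ ≥ φ` from `t₁` on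
(a barrier that never touches from below cannot be crossed). Hence `tθ(t) ≥ c - t^{-1/5} ≥ c/2`
eventually.
-/

open Filter Set Real

theorem le_of_strict_subsolution_of_supersolution {F : ℝ → ℝ → ℝ} {f f' g g' : ℝ → ℝ} {a : ℝ}
    (hf : ContinuousOn f (Ici a)) (hf' : ∀ x ∈ Ici a, HasDerivWithinAt f (f' x) (Ici x) x)
    (hg : ContinuousOn g (Ici a)) (hg' : ∀ x ∈ Ici a, HasDerivWithinAt g (g' x) (Ici x) x)
    (hfF : ∀ x ∈ Ici a, f' x < F x (f x)) (hgF : ∀ x ∈ Ici a, F x (g x) ≤ g' x)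
    (ha : f a ≤ g a) {x : ℝ} (hx : a ≤ x) : f x ≤ g x := by
  refine image_le_of_deriv_right_lt_deriv_boundary' (hf.mono Icc_subset_Ici_self)
    (fun y hy => hf' y hy.1) ha (hg.mono Icc_subset_Ici_self) (fun y hy => hg' y hy.1)
    (fun y hy hfg => ?_) ⟨hx, le_rfl⟩
  calc f' y < F y (f y) := hfF y hy.1
    _ = F y (g y) := by rw [hfg]
    _ ≤ g' y := hgF y hy.1

-- The correction `t^{-6/5}` is what absorbs the forcing term `t^{-11/5}` of the inequality for `θ`.
noncomputable def barrier (c t : ℝ) : ℝ := c / t - t ^ (-(1.2:ℝ))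

section Barrier

variable {c t : ℝ}

theorem rpow_neg_one_point_two (ht : 0 < t) : t ^ (-(1.2:ℝ)) = t ^ (-(0.2:ℝ)) / t := by
  rw [← rpow_sub_one ht.ne']; norm_num

theorem rpow_neg_two_point_two (ht : 0 < t) : t ^ (-(2.2:ℝ)) = t ^ (-(0.2:ℝ)) / t ^ 2 := by
  rw [← rpow_sub_natCast ht.ne']; norm_num

theorem mul_barrier (ht : 0 < t) : t * barrier c t = c - t ^ (-(0.2:ℝ)) := by
  rw [barrier, rpow_neg_one_point_two ht]
  field_simp

theorem hasDerivAt_barrier (ht : 0 < t) :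
    HasDerivAt (barrier c) ((1.2 * t ^ (-(0.2:ℝ)) - c) / t ^ 2) t := by
  have hrpow : HasDerivAt (fun x : ℝ => x ^ (-(1.2:ℝ))) (-(1.2:ℝ) * t ^ (-(1.2:ℝ) - 1)) t :=
    hasDerivAt_rpow_const (Or.inl ht.ne')
  refine (((hasDerivAt_inv ht.ne').const_mul c).sub hrpow).congr_deriv ?_
  rw [show -(1.2:ℝ) - 1 = -(2.2:ℝ) by norm_num, rpow_neg_two_point_two ht]
  field_simp
  ring

theorem barrier_deriv_lt (ht : 0 < t) (hc : 0 < c) (hc_half : c ≤ 1 / 2)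
    (hsmall : t ^ (-(0.2:ℝ)) ≤ c / 9) :
    (1.2 * t ^ (-(0.2:ℝ)) - c) / t ^ 2 < -(3 / 2) * barrier c t ^ 2 - t ^ (-(2.2:ℝ)) := by
  have hbarrier : barrier c t = (c - t ^ (-(0.2:ℝ))) / t := by
    rw [← mul_barrier ht]; field_simp
  rw [hbarrier, rpow_neg_two_point_two ht]
  set s := t ^ (-(0.2:ℝ))
  have hs : 0 < s := rpow_pos_of_pos ht _
  have ht2 : 0 < t ^ 2 := by positivity
  rw [div_pow, ← mul_div_assoc, ← sub_div, div_lt_div_iff_of_pos_right ht2]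
  -- `(3/2)(c - s)² + (11/5)s ≤ (3/4)c + (11/45)c < c`
  nlinarith

end Barrier

theorem barrier_le_of_supersolution {θ θ' : ℝ → ℝ} {c t₁ t : ℝ} (ht₁ : 0 < t₁) (hc : 0 < c)
    (hc_half : c ≤ 1 / 2) (hsmall : ∀ x ≥ t₁, x ^ (-(0.2:ℝ)) ≤ c / 9)
    (hθ : ∀ x ≥ t₁, HasDerivAt θ (θ' x) x)
    (hsuper : ∀ x ≥ t₁, -(3 / 2) * θ x ^ 2 - x ^ (-(2.2:ℝ)) ≤ θ' x)
    (hstart : c ≤ t₁ * θ t₁) (ht : t₁ ≤ t) : barrier c t ≤ θ t := by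
  have hpos : ∀ x ∈ Ici t₁, 0 < x := fun x hx => ht₁.trans_le hx
  refine le_of_strict_subsolution_of_supersolution
    (F := fun x y => -(3 / 2) * y ^ 2 - x ^ (-(2.2:ℝ)))
    (fun x hx => (hasDerivAt_barrier (hpos x hx)).continuousAt.continuousWithinAt)
    (fun x hx => (hasDerivAt_barrier (hpos x hx)).hasDerivWithinAt)
    (fun x hx => (hθ x hx).continuousAt.continuousWithinAt)
    (fun x hx => (hθ x hx).hasDerivWithinAt)
    (fun x hx => barrier_deriv_lt (hpos x hx) hc hc_half (hsmall x hx)) hsuper ?_ ht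
  rw [← mul_le_mul_iff_of_pos_left ht₁, mul_barrier ht₁]
  linarith [rpow_pos_of_pos ht₁ (-(0.2:ℝ))]

theorem liminf_positive_general (T₀ : ℝ) (θ : ℝ → ℝ)
    (hθ0 : ∀ t ≥ T₀, 0 ≤ θ t)
    (hC1 : ContDiffOn ℝ 1 θ (Set.Ici T₀))
    (hbdd : ∃ M : ℝ, ∀ᶠ t in Filter.atTop, t * θ t ≤ M)
    (hlimsup : 0 < Filter.limsup (fun t => t * θ t) Filter.atTop)
    (hdiff : ∀ t > T₀, -(3 / 2) * (θ t) ^ 2 - t ^ (-(2.2:ℝ)) ≤ deriv θ t) :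
    0 < Filter.liminf (fun t => t * θ t) Filter.atTop := by
  set c : ℝ := min (limsup (fun t => t * θ t) atTop / 2) (1 / 2)
  have hc : 0 < c := lt_min (by linarith) (by norm_num)
  have hbdd_below : IsBoundedUnder (· ≥ ·) atTop (fun t => t * θ t) :=
    ⟨0, (eventually_ge_atTop (max T₀ 0)).mono fun t ht =>
      mul_nonneg (le_of_max_le_right ht) (hθ0 t (le_of_max_le_left ht))⟩
  have hfreq : ∃ᶠ t in atTop, c < t * θ t :=
    frequently_lt_of_lt_limsup hbdd_below.isCoboundedUnder_le
      ((min_le_left _ _).trans_lt (by linarith))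
  obtain ⟨T, hT⟩ := eventually_atTop.1 <| (eventually_gt_atTop (max T₀ 0)).and <|
    (tendsto_rpow_neg_atTop (by norm_num : (0:ℝ) < 0.2)).eventually
      (ge_mem_nhds (show (0:ℝ) < c / 9 by positivity))
  obtain ⟨t₁, hct₁, ht₁⟩ := (hfreq.and_eventually (eventually_ge_atTop T)).exists
  have hT₀ : ∀ x ≥ t₁, T₀ < x := fun x hx => (le_max_left _ _).trans_lt (hT x (ht₁.trans hx)).1
  have hpos : ∀ x ≥ t₁, 0 < x := fun x hx => (le_max_right _ _).trans_lt (hT x (ht₁.trans hx)).1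
  have hsmall : ∀ x ≥ t₁, x ^ (-(0.2:ℝ)) ≤ c / 9 := fun x hx => (hT x (ht₁.trans hx)).2
  have hθ' : ∀ x ≥ t₁, HasDerivAt θ (deriv θ x) x := fun x hx =>
    ((hC1.differentiableOn one_ne_zero).differentiableAt (Ici_mem_nhds (hT₀ x hx))).hasDerivAt
  have hlower : ∀ᶠ t in atTop, c / 2 ≤ t * θ t := by
    filter_upwards [eventually_ge_atTop t₁] with t ht
    have hbarrier := barrier_le_of_supersolution (hpos t₁ le_rfl) hc (min_le_right _ _) hsmall hθ'
      (fun x hx => hdiff x (hT₀ x hx)) hct₁.le ht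
    calc c / 2 ≤ c - t ^ (-(0.2:ℝ)) := by linarith [hsmall t ht]
      _ = t * barrier c t := (mul_barrier (hpos t ht)).symm
      _ ≤ t * θ t := mul_le_mul_of_nonneg_left hbarrier (hpos t ht).le
  have hbdd_above : IsBoundedUnder (· ≤ ·) atTop (fun t => t * θ t) := hbdd
  exact (half_pos hc).trans_le (le_liminf_of_le hbdd_above.isCoboundedUnder_ge hlower)

/-- If `θ ≥ 0` is C¹ on `[T₀,∞)` with `0 < limsup tθ(t) < ∞` and
`θ' ≥ -(3/2)θ² - t^{-2.2}`, then `liminf tθ(t) > 0`. -/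
theorem liminf_positive (T₀ : ℝ) (hT₀ : 1 ≤ T₀) (θ : ℝ → ℝ)
    (hθ0 : ∀ t ≥ T₀, 0 ≤ θ t)
    (hC1 : ContDiffOn ℝ 1 θ (Set.Ici T₀))
    (hbdd : ∃ M : ℝ, ∀ᶠ t in Filter.atTop, t * θ t ≤ M)
    (hlimsup : 0 < Filter.limsup (fun t => t * θ t) Filter.atTop)
    (hdiff : ∀ t > T₀, -(3 / 2) * (θ t) ^ 2 - t ^ (-(2.2:ℝ)) ≤ deriv θ t) :
    0 < Filter.liminf (fun t => t * θ t) Filter.atTop :=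
  liminf_positive_general T₀ θ hθ0 hC1 hbdd hlimsup hdiff
end

section
/- Let T₀ ≥ 1 and 0 < κ₀ < 1. Suppose θ : [T₀,∞) → [0,∞) satisfies θ(t) ≤ κ₀/t and θ(t) ≤ (1/2)∫_t^∞ θ(s)² ds + 1/(2t²) for all t ≥ T₀. Then there is a constant C₁ > 0 (depending on κ₀, T₀) with θ(t) ≤ C₁/t² for all t ≥ T₀. -/
open MeasureTheory

/-- If `0 ≤ θ(t) ≤ κ₀/t` and `θ(t) ≤ (1/2)∫_t^∞ θ² + 1/(2t²)` for `t ≥ T₀`, then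
`θ(t) ≤ C₁/t²`. -/
theorem quadratic_decay (T₀ κ₀ : ℝ) (hT₀ : 1 ≤ T₀) (hκ₀ : 0 < κ₀) (hκ₀' : κ₀ < 1)
    (θ : ℝ → ℝ) (hθ0 : ∀ t ≥ T₀, 0 ≤ θ t)
    (h1 : ∀ t ≥ T₀, θ t ≤ κ₀ / t)
    (h2 : ∀ t ≥ T₀, θ t ≤ (1 / 2) * (∫ s in Set.Ioi t, (θ s) ^ 2) + 1 / (2 * t ^ 2)) :
    ∃ C₁ > 0, ∀ t ≥ T₀, θ t ≤ C₁ / t ^ 2 := by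
  -- step lemma: if θ ≤ β/t + c/t² on [T₀,∞), then θ ≤ (β²/2)/t + (βc/2+1/2+c²/4)/t²
  have key : ∀ β c : ℝ, 0 ≤ β → 0 ≤ c →
      (∀ t ≥ T₀, θ t ≤ β / t + c / t ^ 2) →
      (∀ t ≥ T₀, θ t ≤ (β ^ 2 / 2) / t + (β * c / 2 + 1 / 2 + c ^ 2 / 4) / t ^ 2) := by
    intro β c hβ hc hP t ht
    have ht1 : (1 : ℝ) ≤ t := le_trans hT₀ ht
    have ht0 : (0 : ℝ) < t := lt_of_lt_of_le one_pos ht1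
    set A : ℝ := 2 * β * c + c ^ 2 / t with hA
    have hA0 : 0 ≤ A := by positivity
    -- the dominating function
    have hg2 : IntegrableOn (fun s : ℝ => s ^ (-2 : ℝ)) (Set.Ioi t) :=
      integrableOn_Ioi_rpow_of_lt (by norm_num) ht0
    have hg3 : IntegrableOn (fun s : ℝ => s ^ (-3 : ℝ)) (Set.Ioi t) :=
      integrableOn_Ioi_rpow_of_lt (by norm_num) ht0
    have hgint : IntegrableOn (fun s : ℝ => β ^ 2 * s ^ (-2 : ℝ) + A * s ^ (-3 : ℝ))
        (Set.Ioi t) := (hg2.const_mul _).add (hg3.const_mul _)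
    have hgval : (∫ s in Set.Ioi t, (β ^ 2 * s ^ (-2 : ℝ) + A * s ^ (-3 : ℝ)))
        = β ^ 2 / t + A / (2 * t ^ 2) := by
      rw [integral_add (hg2.const_mul _) (hg3.const_mul _), integral_const_mul,
        integral_const_mul, integral_Ioi_rpow_of_lt (by norm_num) ht0,
        integral_Ioi_rpow_of_lt (by norm_num) ht0]
      have h1' : t ^ (-2 + 1 : ℝ) = 1 / t := by
        rw [show (-2 + 1 : ℝ) = -1 by norm_num, Real.rpow_neg_one, one_div]
      have h2' : t ^ (-3 + 1 : ℝ) = 1 / t ^ 2 := by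
        rw [show (-3 + 1 : ℝ) = -(2 : ℕ) by push_cast; ring,
          Real.rpow_neg ht0.le, Real.rpow_natCast, one_div]
      rw [h1', h2']
      field_simp
      ring
    have hmono : (∫ s in Set.Ioi t, θ s ^ 2)
        ≤ ∫ s in Set.Ioi t, (β ^ 2 * s ^ (-2 : ℝ) + A * s ^ (-3 : ℝ)) := by
      apply integral_mono_of_nonneg _ hgint
      · refine (ae_restrict_iff' measurableSet_Ioi).2 (ae_of_all _ fun s hs => ?_)
        have hst : t < s := hs
        have hs0 : (0 : ℝ) < s := lt_trans ht0 hst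
        have hsT : T₀ ≤ s := le_trans ht hst.le
        have hθs := hP s hsT
        have hθs0 := hθ0 s hsT
        have hsq : θ s ^ 2 ≤ (β / s + c / s ^ 2) ^ 2 := by
          apply pow_le_pow_left₀ hθs0 hθs
        calc θ s ^ 2 ≤ (β / s + c / s ^ 2) ^ 2 := hsq
          _ = β ^ 2 / s ^ 2 + 2 * β * c / s ^ 3 + c ^ 2 / s ^ 4 := by
              field_simp; ring
          _ ≤ β ^ 2 / s ^ 2 + 2 * β * c / s ^ 3 + (c ^ 2 / t) / s ^ 3 := by
              have hk : c ^ 2 / s ^ 4 ≤ c ^ 2 / t / s ^ 3 := by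
                rw [div_div]
                apply div_le_div_of_nonneg_left (by positivity) (by positivity)
                calc t * s ^ 3 ≤ s * s ^ 3 := by
                      apply mul_le_mul_of_nonneg_right hst.le (by positivity)
                  _ = s ^ 4 := by ring
              linarith
          _ = β ^ 2 * s ^ (-2 : ℝ) + A * s ^ (-3 : ℝ) := by
              rw [show (-2 : ℝ) = -(2 : ℕ) by norm_num,
                show (-3 : ℝ) = -(3 : ℕ) by norm_num,
                Real.rpow_neg hs0.le, Real.rpow_neg hs0.le,
                Real.rpow_natCast, Real.rpow_natCast, hA]
              field_simp
              ring
      · exact ae_of_all _ fun s => sq_nonneg (θ s)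
    have := h2 t ht
    have hfinal : θ t ≤ (1 / 2) * (β ^ 2 / t + A / (2 * t ^ 2)) + 1 / (2 * t ^ 2) := by
      calc θ t ≤ (1 / 2) * (∫ s in Set.Ioi t, (θ s) ^ 2) + 1 / (2 * t ^ 2) := this
        _ ≤ (1 / 2) * (β ^ 2 / t + A / (2 * t ^ 2)) + 1 / (2 * t ^ 2) := by
            gcongr
            rw [← hgval]; exact hmono
    -- now arithmetic: (1/2)(β²/t + A/(2t²)) + 1/(2t²) ≤ (β²/2)/t + (βc/2+1/2+c²/4)/t²
    have harith : (1 / 2) * (β ^ 2 / t + A / (2 * t ^ 2)) + 1 / (2 * t ^ 2)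
        ≤ (β ^ 2 / 2) / t + (β * c / 2 + 1 / 2 + c ^ 2 / 4) / t ^ 2 := by
      have h3 : c ^ 2 / (4 * t ^ 3) ≤ c ^ 2 / (4 * t ^ 2) := by
        apply div_le_div_of_nonneg_left (by positivity) (by positivity)
        nlinarith
      have e1 : (1 / 2) * (β ^ 2 / t + A / (2 * t ^ 2)) + 1 / (2 * t ^ 2)
          = β ^ 2 / (2 * t) + β * c / (2 * t ^ 2) + c ^ 2 / (4 * t ^ 3)
            + 1 / (2 * t ^ 2) := by
        rw [hA]; field_simp; ring
      have e2 : (β ^ 2 / 2) / t + (β * c / 2 + 1 / 2 + c ^ 2 / 4) / t ^ 2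
          = β ^ 2 / (2 * t) + β * c / (2 * t ^ 2) + c ^ 2 / (4 * t ^ 2)
            + 1 / (2 * t ^ 2) := by
        field_simp; ring
      rw [e1, e2]; linarith
    exact le_trans hfinal harith
  -- main induction
  have main : ∀ n : ℕ, ∃ β : ℝ, 0 ≤ β ∧ β ≤ (1 / 2) ^ (n + 1) ∧
      ∀ t ≥ T₀, θ t ≤ β / t + 1 / t ^ 2 := by
    intro n
    induction n with
    | zero =>
      have base : ∀ t ≥ T₀, θ t ≤ κ₀ / t + 0 / t ^ 2 := by
        intro t ht; simpa using h1 t ht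
      have step0 := key κ₀ 0 hκ₀.le le_rfl base
      refine ⟨κ₀ ^ 2 / 2, by positivity, by nlinarith, ?_⟩
      intro t ht
      have h := step0 t ht
      have ht0 : (0 : ℝ) < t := lt_of_lt_of_le one_pos (le_trans hT₀ ht)
      calc θ t ≤ (κ₀ ^ 2 / 2) / t + (κ₀ * 0 / 2 + 1 / 2 + 0 ^ 2 / 4) / t ^ 2 := h
        _ ≤ (κ₀ ^ 2 / 2) / t + 1 / t ^ 2 := by gcongr; norm_num
    | succ n ih =>
      obtain ⟨β, hβ0, hβle, hP⟩ := ih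
      have hβhalf : β ≤ 1 / 2 := le_trans hβle <| by
        calc ((1 : ℝ) / 2) ^ (n + 1) ≤ (1 / 2) ^ 1 :=
              pow_le_pow_of_le_one (by norm_num) (by norm_num)
                (Nat.succ_le_succ (Nat.zero_le n))
          _ = 1 / 2 := by norm_num
      have step := key β 1 hβ0 zero_le_one hP
      refine ⟨β ^ 2 / 2, by positivity, ?_, ?_⟩
      · have h' : β ^ 2 ≤ β := by nlinarith
        calc β ^ 2 / 2 ≤ β / 2 := by linarith
          _ ≤ (1 / 2) ^ (n + 1) / 2 := by linarith
          _ = (1 / 2) ^ (n + 1 + 1) := by ring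
      · intro t ht
        have h := step t ht
        have ht0 : (0 : ℝ) < t := lt_of_lt_of_le one_pos (le_trans hT₀ ht)
        calc θ t ≤ (β ^ 2 / 2) / t + (β * 1 / 2 + 1 / 2 + 1 ^ 2 / 4) / t ^ 2 := h
          _ ≤ (β ^ 2 / 2) / t + 1 / t ^ 2 := by gcongr; nlinarith
  refine ⟨1, one_pos, ?_⟩
  intro t ht
  have ht1 : (1 : ℝ) ≤ t := le_trans hT₀ ht
  have ht0 : (0 : ℝ) < t := lt_of_lt_of_le one_pos ht1
  rw [one_div]
  rw [← one_div]
  apply le_of_forall_pos_le_add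
  intro ε hε
  obtain ⟨n, hn⟩ := exists_pow_lt_of_lt_one (mul_pos hε ht0) (by norm_num : (1 : ℝ) / 2 < 1)
  obtain ⟨β, hβ0, hβle, hP⟩ := main n
  have hβε : β / t ≤ ε := by
    rw [div_le_iff₀ ht0]
    calc β ≤ (1 / 2) ^ (n + 1) := hβle
      _ ≤ (1 / 2) ^ n :=
        pow_le_pow_of_le_one (by norm_num) (by norm_num) (Nat.le_succ n)
      _ ≤ ε * t := hn.le
  have := hP t ht
  linarith
end

section
/- Let T ≥ 3 and θ : [T,∞) → [0,∞) be C¹ with sup_{t≥T} tθ(t) < ∞ and θ'(t) = -(3/2)θ(t)² + F(t), where |F(t)| ≤ K₀ t^{-3} for all t ≥ T. Then there exists θ* ∈ ℝ such that θ(t) = θ*/t + R(t) with sup_{t≥T} |R(t)| t² / ln t < ∞. -/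
/-!
The substitution `u = exp ((3/2) ∫ θ)` turns the Riccati equation into the linear equation
`u'' = (3/2) F u`, with `θ = (2/3) u'/u`. Since `|u''| ≤ c u / t³`, a Grönwall argument applied
to `u' + (c/2) u / t²` shows that `u` grows at most linearly; then `|u''| = O(t⁻²)`, so `u'`
converges to some `b` with `u' - b = O(1/t)`. If `b > 0`, then `u = b t + O(log t)` and
`u'/u = 1/t + O(log t / t²)`. Otherwise `u = O(log t)`, so `|u''| = O(log t / t³)`, and
`u' = O(log t / t²)` after integrating from infinity; since `u ≥ u (T + 1) > 0`, the same
holds for `u'/u`. Continuity takes care of the compact initial segment.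
-/

open Set Filter Topology Real Asymptotics

section Comparison

variable {f g f' g' : ℝ → ℝ} {a : ℝ}

theorem monotoneOn_Ici_of_hasDerivAt_nonneg (hf : ∀ x ≥ a, HasDerivAt f (f' x) x)
    (h : ∀ x > a, 0 ≤ f' x) : MonotoneOn f (Ici a) :=
  monotoneOn_of_hasDerivWithinAt_nonneg (convex_Ici a)
    (fun x hx => (hf x hx).continuousAt.continuousWithinAt)
    (fun x hx => (hf x (interior_subset hx)).hasDerivWithinAt)
    (fun x hx => h x (by rwa [interior_Ici] at hx))

theorem abs_sub_le_sub_of_abs_deriv_le (hf : ∀ x ≥ a, HasDerivAt f (f' x) x)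
    (hg : ∀ x ≥ a, HasDerivAt g (g' x) x) (h : ∀ x > a, |f' x| ≤ g' x)
    {s t : ℝ} (hs : a ≤ s) (hst : s ≤ t) : |f t - f s| ≤ g t - g s := by
  have hsub := monotoneOn_Ici_of_hasDerivAt_nonneg (fun x hx => (hg x hx).sub (hf x hx))
    fun x hx => sub_nonneg.2 ((le_abs_self _).trans (h x hx))
  have hadd := monotoneOn_Ici_of_hasDerivAt_nonneg (fun x hx => (hg x hx).add (hf x hx))
    fun x hx => by linarith [neg_abs_le (f' x), h x hx]
  have h₁ := hsub hs (hs.trans hst) hst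
  have h₂ := hadd hs (hs.trans hst) hst
  simp only [Pi.sub_apply, Pi.add_apply] at h₁ h₂
  exact abs_sub_le_iff.2 ⟨by linarith, by linarith⟩

theorem exists_abs_sub_le_of_abs_deriv_le_neg (hf : ∀ x ≥ a, HasDerivAt f (f' x) x)
    (hg : ∀ x ≥ a, HasDerivAt g (g' x) x) (h : ∀ x > a, |f' x| ≤ -g' x)
    (hg₀ : ∀ x ≥ a, 0 ≤ g x) : ∃ b, ∀ t ≥ a, |f t - b| ≤ g t := by
  have hfg : ∀ s ≥ a, ∀ t ≥ s, |f t - f s| ≤ g s - g t := fun s hs t hst => by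
    have := abs_sub_le_sub_of_abs_deriv_le hf (fun x hx => (hg x hx).neg) h hs hst
    simp only [Pi.neg_apply] at this
    linarith
  have hbdd : BddAbove ((fun s => f s - g s) '' Ici a) := by
    refine ⟨f a + g a, ?_⟩
    rintro _ ⟨s, hs, rfl⟩
    linarith [(abs_le.1 (hfg a le_rfl s hs)).2, hg₀ s hs]
  -- `f - g` increases, `f + g` decreases, and their common limit is `sSup (f - g)`.
  refine ⟨sSup ((fun s => f s - g s) '' Ici a), fun t ht => abs_le.2 ⟨?_, ?_⟩⟩
  · have : ∀ y ∈ (fun s => f s - g s) '' Ici a, y ≤ f t + g t := by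
      rintro _ ⟨s, hs, rfl⟩
      rcases le_total s t with hst | hts
      · linarith [(abs_le.1 (hfg s hs t hst)).1, hg₀ t ht]
      · linarith [(abs_le.1 (hfg t ht s hts)).2, hg₀ s hs]
    have hle : sSup ((fun s => f s - g s) '' Ici a) ≤ f t + g t :=
      csSup_le ⟨_, mem_image_of_mem _ ht⟩ this
    linarith
  · linarith [le_csSup hbdd (mem_image_of_mem (fun s => f s - g s) ht)]

theorem nonpos_of_monotoneOn_of_le_of_tendsto_zero {h k : ℝ → ℝ} (hh : MonotoneOn h (Ici a))
    (hk : Tendsto k atTop (𝓝 0)) (hle : ∀ t ≥ a, h t ≤ k t) {t : ℝ} (ht : a ≤ t) : h t ≤ 0 :=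
  ge_of_tendsto hk <| (eventually_ge_atTop t).mono fun s hs =>
    (hh ht (ht.trans hs) hs).trans (hle s (ht.trans hs))

theorem mul_exp_le_of_hasDerivAt_le {c : ℝ} (ha : 0 < a) (hf : ∀ x ≥ a, HasDerivAt f (f' x) x)
    (h : ∀ x > a, f' x ≤ c * f x / x ^ 2) {t : ℝ} (ht : a ≤ t) :
    f t * exp (c / t) ≤ f a * exp (c / a) := by
  have hmono : MonotoneOn (fun x => -(f x * exp (c / x))) (Ici a) := by
    refine monotoneOn_Ici_of_hasDerivAt_nonneg
      (f' := fun x => -((f' x - c * f x / x ^ 2) * exp (c / x))) (fun x hx => ?_) fun x hx => ?_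
    · have hx₀ : x ≠ 0 := (ha.trans_le hx).ne'
      have hinv : HasDerivAt (fun y => c / y) (-(c / x ^ 2)) x := by
        simpa [div_eq_mul_inv] using (hasDerivAt_inv hx₀).const_mul c
      exact ((hf x hx).mul hinv.exp).neg.congr_deriv (by ring)
    · exact neg_nonneg.2 (mul_nonpos_of_nonpos_of_nonneg (by linarith [h x hx]) (exp_pos _).le)
  simpa using hmono self_mem_Ici ht ht

end Comparison

section SecondOrder

variable {u v w : ℝ → ℝ} {a c : ℝ}

theorem exists_deriv_le_of_deriv_deriv_le (ha : 0 < a) (hc : 0 ≤ c)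
    (hu : ∀ x ≥ a, HasDerivAt u (v x) x) (hv : ∀ x ≥ a, HasDerivAt v (w x) x)
    (hw : ∀ x ≥ a, w x ≤ c * u x / x ^ 3) (hu₀ : ∀ x ≥ a, 0 ≤ u x) (hv₀ : ∀ x ≥ a, 0 ≤ v x) :
    ∃ B, ∀ x ≥ a, v x ≤ B := by
  -- `W = v + (c/2) u / x²` satisfies `W' ≤ (c/2) W / x²`, so Grönwall bounds `W ≥ v`.
  set W : ℝ → ℝ := fun x => v x + c / 2 * (u x / x ^ 2)
  have hW : ∀ x ≥ a, HasDerivAt W (w x + c / 2 * (v x / x ^ 2) - c * u x / x ^ 3) x := by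
    intro x hx
    have hx₀ : x ≠ 0 := (ha.trans_le hx).ne'
    have hsq : HasDerivAt (fun y => y ^ 2) (2 * x) x := by simpa using hasDerivAt_pow 2 x
    refine ((hv x hx).add (((hu x hx).div hsq (pow_ne_zero 2 hx₀)).const_mul (c / 2))).congr_deriv
      ?_
    field_simp
    ring
  have hW' : ∀ x > a, w x + c / 2 * (v x / x ^ 2) - c * u x / x ^ 3 ≤ c / 2 * W x / x ^ 2 := by
    intro x hx
    have := hw x hx.le
    have : 0 ≤ c / 2 * (c / 2 * (u x / x ^ 2)) / x ^ 2 := by have := hu₀ x hx.le; positivity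
    have : c / 2 * W x / x ^ 2
        = c / 2 * (v x / x ^ 2) + c / 2 * (c / 2 * (u x / x ^ 2)) / x ^ 2 := by
      simp only [W]; ring
    linarith
  refine ⟨W a * exp (c / 2 / a), fun x hx => ?_⟩
  have hx₀ := ha.trans_le hx
  have hu₀x := hu₀ x hx
  have hexp : 1 ≤ exp (c / 2 / x) := one_le_exp (by positivity)
  calc v x ≤ W x := le_add_of_nonneg_right (by positivity)
    _ ≤ W x * exp (c / 2 / x) := le_mul_of_one_le_right (by have := hv₀ x hx; positivity) hexp
    _ ≤ W a * exp (c / 2 / a) := mul_exp_le_of_hasDerivAt_le ha hW hW' hx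

theorem exists_le_mul_of_deriv_deriv_le (ha : 0 < a) (hc : 0 ≤ c)
    (hu : ∀ x ≥ a, HasDerivAt u (v x) x) (hv : ∀ x ≥ a, HasDerivAt v (w x) x)
    (hw : ∀ x ≥ a, w x ≤ c * u x / x ^ 3) (hu₀ : ∀ x ≥ a, 0 ≤ u x) (hv₀ : ∀ x ≥ a, 0 ≤ v x) :
    ∃ A, 0 ≤ A ∧ ∀ t ≥ a, u t ≤ A * t := by
  obtain ⟨B, hvB⟩ := exists_deriv_le_of_deriv_deriv_le ha hc hu hv hw hu₀ hv₀
  have hB₀ : 0 ≤ B := (hv₀ a le_rfl).trans (hvB a le_rfl)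
  have hua := hu₀ a le_rfl
  refine ⟨u a / a + B, by positivity, fun t ht => ?_⟩
  have hlin := abs_sub_le_sub_of_abs_deriv_le hu (fun x _ => (hasDerivAt_id x).const_mul B)
    (fun x hx => by rw [abs_of_nonneg (hv₀ x hx.le)]; simpa using hvB x hx.le) le_rfl ht
  have : u a ≤ u a / a * t := by
    rw [div_mul_eq_mul_div, le_div_iff₀ ha]; exact mul_le_mul_of_nonneg_left ht hua
  have : u t - u a ≤ B * t - B * a := (le_abs_self _).trans (by simpa using hlin)
  nlinarith

theorem exists_abs_deriv_sub_le_div (ha : 0 < a) (hc : 0 ≤ c)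
    (hu : ∀ x ≥ a, HasDerivAt u (v x) x) (hv : ∀ x ≥ a, HasDerivAt v (w x) x)
    (hw : ∀ x ≥ a, |w x| ≤ c * u x / x ^ 3) (hu₀ : ∀ x ≥ a, 0 ≤ u x) (hv₀ : ∀ x ≥ a, 0 ≤ v x) :
    ∃ b D, 0 ≤ D ∧ ∀ t ≥ a, |v t - b| ≤ D / t := by
  obtain ⟨A, hA, huA⟩ := exists_le_mul_of_deriv_deriv_le ha hc hu hv
    (fun x hx => (le_abs_self _).trans (hw x hx)) hu₀ hv₀
  obtain ⟨b, hb⟩ := exists_abs_sub_le_of_abs_deriv_le_neg (g := fun x => c * A / x) hv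
    (fun x hx => by
      simpa [div_eq_mul_inv] using (hasDerivAt_inv (ha.trans_le hx).ne').const_mul (c * A))
    (fun x hx => by
      have hx₀ : 0 < x := ha.trans hx
      calc |w x| ≤ c * u x / x ^ 3 := hw x hx.le
        _ ≤ c * (A * x) / x ^ 3 := by gcongr; exact huA x hx.le
        _ = -(-(c * A / x ^ 2)) := by field_simp)
    (fun x hx => by have := ha.trans_le hx; positivity)
  exact ⟨b, c * A, by positivity, hb⟩

theorem exists_deriv_le_mul_one_add_log_div_sq (ha : 1 ≤ a) (hc : 0 ≤ c)
    (hu : ∀ x ≥ a, HasDerivAt u (v x) x) (hv : ∀ x ≥ a, HasDerivAt v (w x) x)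
    (hw : ∀ x ≥ a, |w x| ≤ c * u x / x ^ 3) (hu₀ : ∀ x ≥ a, 0 ≤ u x) (hv₀ : ∀ x ≥ a, 0 ≤ v x)
    {D : ℝ} (hD : 0 ≤ D) (hvD : ∀ t ≥ a, v t ≤ D / t) :
    ∃ C, ∀ t ≥ a, v t ≤ C * (1 + log t) / t ^ 2 := by
  have hx₀ : ∀ x ≥ a, 0 < x := fun x hx => by linarith
  have hlog₀ : ∀ x ≥ a, 0 ≤ log x := fun x hx => log_nonneg (by linarith)
  have hulog : ∀ t ≥ a, u t ≤ u a + D * log t := fun t ht => by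
    have := abs_sub_le_sub_of_abs_deriv_le hu
      (fun x hx => (hasDerivAt_log (hx₀ x hx).ne').const_mul D)
      (fun x hx => by
        rw [abs_of_nonneg (hv₀ x hx.le), ← div_eq_mul_inv]; exact hvD x hx.le) le_rfl ht
    linarith [(abs_le.1 this).2, mul_nonneg hD (hlog₀ a le_rfl)]
  -- `Φ = C (1 + log x) / x²` is a primitive of `-C (1 + 2 log x) / x³`, which dominates `|w|`.
  set C := c * (u a + D)
  have hC : 0 ≤ C := mul_nonneg hc (add_nonneg (hu₀ a le_rfl) hD)
  set Φ : ℝ → ℝ := fun x => C * (1 + log x) / x ^ 2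
  have hΦ : ∀ x ≥ a, HasDerivAt (fun x => v x - Φ x) (w x + C * (1 + 2 * log x) / x ^ 3) x := by
    intro x hx
    have hx0 := (hx₀ x hx).ne'
    have hsq : HasDerivAt (fun y => y ^ 2) (2 * x) x := by simpa using hasDerivAt_pow 2 x
    refine ((hv x hx).sub ((((hasDerivAt_log hx0).const_add 1).const_mul C).div hsq
      (pow_ne_zero 2 hx0))).congr_deriv ?_
    field_simp
    ring
  have hmono := monotoneOn_Ici_of_hasDerivAt_nonneg hΦ fun x hx => by
    have := hx₀ x hx.le
    have hw' : -w x ≤ c * (u a + D * log x) / x ^ 3 :=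
      (neg_le_abs _).trans ((hw x hx.le).trans (by gcongr; exact hulog x hx.le))
    have : c * (u a + D * log x) / x ^ 3 ≤ C * (1 + 2 * log x) / x ^ 3 := by
      have := hu₀ a le_rfl; have := hlog₀ x hx.le
      gcongr ?_ / _
      rw [mul_assoc]
      exact mul_le_mul_of_nonneg_left (by nlinarith) hc
    linarith
  refine ⟨C, fun t ht => ?_⟩
  have := nonpos_of_monotoneOn_of_le_of_tendsto_zero (k := fun s => D / s) hmono
    (tendsto_const_nhds.div_atTop tendsto_id)
    (fun s hs => by
      have : 0 ≤ Φ s := by have := hlog₀ s hs; positivity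
      linarith [hvD s hs]) ht
  exact sub_nonpos.1 this

theorem exists_abs_sub_mul_le_one_add_log (ha : 1 ≤ a) (hu : ∀ x ≥ a, HasDerivAt u (v x) x)
    {b D : ℝ} (hD : 0 ≤ D) (hvb : ∀ t ≥ a, |v t - b| ≤ D / t) :
    ∃ E, 0 ≤ E ∧ ∀ t ≥ a, |u t - b * t| ≤ E * (1 + log t) := by
  have hlog₀ : ∀ x ≥ a, 0 ≤ log x := fun x hx => log_nonneg (by linarith)
  refine ⟨|u a - b * a| + D, by positivity, fun t ht => ?_⟩
  have := abs_sub_le_sub_of_abs_deriv_le (f := fun x => u x - b * x)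
    (fun x hx => (hu x hx).sub ((hasDerivAt_id x).const_mul b))
    (fun x hx => (hasDerivAt_log (by linarith)).const_mul D)
    (fun x hx => by simpa [div_eq_mul_inv] using hvb x hx.le) le_rfl ht
  have := abs_sub_abs_le_abs_sub (u t - b * t) (u a - b * a)
  have := mul_nonneg hD (hlog₀ a le_rfl)
  have := mul_nonneg (abs_nonneg (u a - b * a)) (hlog₀ t ht)
  nlinarith

theorem eventually_abs_div_sub_inv_le (ha : 1 ≤ a) (hu : ∀ x ≥ a, HasDerivAt u (v x) x)
    (hu₀ : ∀ x ≥ a, 0 < u x) {b D : ℝ} (hb : 0 < b) (hD : 0 ≤ D)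
    (hvb : ∀ t ≥ a, |v t - b| ≤ D / t) :
    ∃ C, ∀ᶠ t in atTop, |v t / u t - 1 / t| ≤ C * (1 + log t) / t ^ 2 := by
  obtain ⟨E, hE, hgrowth⟩ := exists_abs_sub_mul_le_one_add_log ha hu hD hvb
  have hlow : ∀ᶠ t in atTop, b * t / 2 ≤ u t := by
    have := (((isLittleO_const_id_atTop (1 : ℝ)).add isLittleO_log_id_atTop).const_mul_left
      E).bound (half_pos hb)
    filter_upwards [this, eventually_ge_atTop a] with t hsmall ht
    rw [Real.norm_eq_abs, Real.norm_eq_abs, id, abs_of_pos (a := t) (by linarith)] at hsmall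
    linarith [(abs_le.1 (hgrowth t ht)).1, le_abs_self (E * (1 + log t))]
  refine ⟨2 * (D + E) / b, ?_⟩
  filter_upwards [hlow, eventually_ge_atTop a] with t hlow ht
  have ht₀ : 0 < t := by linarith
  have hut := hu₀ t ht
  have hDE : 0 ≤ D + E := by positivity
  have hlogt := log_nonneg (by linarith : 1 ≤ t)
  have hnum : |t * v t - u t| ≤ (D + E) * (1 + log t) := by
    have hder : |t * v t - b * t| ≤ D := by
      rw [show t * v t - b * t = t * (v t - b) by ring, abs_mul, abs_of_pos ht₀, mul_comm,
        ← le_div_iff₀ ht₀]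
      exact hvb t ht
    have := abs_sub_le (t * v t) (b * t) (u t)
    rw [abs_sub_comm (b * t)] at this
    nlinarith [hgrowth t ht]
  calc |v t / u t - 1 / t| = |t * v t - u t| / (t * u t) := by
        rw [div_sub_div _ _ hut.ne' ht₀.ne', abs_div, abs_of_pos (mul_pos hut ht₀)]
        ring_nf
    _ ≤ (D + E) * (1 + log t) / (t * (b * t / 2)) := by
        gcongr
    _ = 2 * (D + E) / b * (1 + log t) / t ^ 2 := by
        field_simp

theorem isBigO_one_add_log_div_sq :
    (fun t : ℝ => (1 + log t) / t ^ 2) =O[atTop] fun t => log t / t ^ 2 := by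
  simp_rw [div_eq_mul_inv]
  exact (isLittleO_const_log_atTop.isBigO.add (isBigO_refl _ _)).mul (isBigO_refl _ _)

theorem exists_isBigO_deriv_div_sub (ha : 1 ≤ a) (hc : 0 ≤ c)
    (hu : ∀ x ≥ a, HasDerivAt u (v x) x) (hv : ∀ x ≥ a, HasDerivAt v (w x) x)
    (hw : ∀ x ≥ a, |w x| ≤ c * u x / x ^ 3) (hu₀ : ∀ x ≥ a, 0 < u x) (hv₀ : ∀ x ≥ a, 0 ≤ v x) :
    ∃ l, (fun t => v t / u t - l / t) =O[atTop] fun t => log t / t ^ 2 := by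
  suffices ∃ l C, ∀ᶠ t in atTop, |v t / u t - l / t| ≤ C * (1 + log t) / t ^ 2 by
    obtain ⟨l, C, h⟩ := this
    refine ⟨l, (IsBigO.of_bound C ?_).trans isBigO_one_add_log_div_sq⟩
    filter_upwards [h, eventually_ge_atTop 1] with t h ht
    rwa [Real.norm_eq_abs, Real.norm_eq_abs, abs_of_nonneg (a := (1 + log t) / t ^ 2)
      (by have := log_nonneg ht; positivity), ← mul_div_assoc]
  obtain ⟨b, D, hD, hvb⟩ := exists_abs_deriv_sub_le_div (by linarith) hc hu hv hw
    (fun x hx => (hu₀ x hx).le) hv₀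
  rcases le_or_gt b 0 with hb | hb
  · obtain ⟨C, hC⟩ := exists_deriv_le_mul_one_add_log_div_sq ha hc hu hv hw
      (fun x hx => (hu₀ x hx).le) hv₀ hD fun t ht => by linarith [(abs_le.1 (hvb t ht)).2]
    refine ⟨0, C / u a, ?_⟩
    filter_upwards [eventually_ge_atTop a] with t ht
    have hmono := monotoneOn_Ici_of_hasDerivAt_nonneg hu fun x hx => hv₀ x hx.le
    have hua := hu₀ a le_rfl
    have hut : u a ≤ u t := hmono self_mem_Ici ht ht
    rw [zero_div, sub_zero, abs_of_nonneg (div_nonneg (hv₀ t ht) (hua.trans_le hut).le)]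
    calc v t / u t ≤ v t / u a := div_le_div_of_nonneg_left (hv₀ t ht) hua hut
      _ ≤ C * (1 + log t) / t ^ 2 / u a := by gcongr; exact hC t ht
      _ = C / u a * (1 + log t) / t ^ 2 := by ring
  · exact ⟨1, eventually_abs_div_sub_inv_le ha hu hu₀ hb hD hvb⟩

end SecondOrder

theorem exists_bound_of_isBigO_log_div_sq {φ : ℝ → ℝ} {T : ℝ} (hT : 1 < T)
    (hφ : ContinuousOn φ (Ici T)) (hO : φ =O[atTop] fun t => log t / t ^ 2) :
    ∃ C, ∀ t ≥ T, |φ t| * t ^ 2 / log t ≤ C := by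
  obtain ⟨c, hc⟩ := hO.bound
  obtain ⟨T₂, hT₂⟩ := eventually_atTop.1 hc
  have hcont : ContinuousOn (fun t => |φ t| * t ^ 2 / log t) (Icc T (max T T₂)) :=
    ((hφ.mono Icc_subset_Ici_self).abs.mul (continuousOn_pow 2)).div
      (continuousOn_log.mono fun t ht => by
        simp only [mem_compl_iff, mem_singleton_iff]; linarith [ht.1])
      fun t ht => (log_pos (by linarith [ht.1])).ne'
  obtain ⟨C₁, hC₁⟩ := isCompact_Icc.exists_bound_of_continuousOn hcont
  refine ⟨max C₁ c, fun t ht => ?_⟩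
  rcases le_total t (max T T₂) with h | h
  · exact (le_abs_self _).trans ((hC₁ t ⟨ht, h⟩).trans (le_max_left _ _))
  · have ht₀ : 0 < t := by linarith
    have hlog := log_pos (by linarith : 1 < t)
    have hbound := hT₂ t (le_of_max_le_right h)
    rw [Real.norm_eq_abs, Real.norm_eq_abs, abs_of_pos (div_pos hlog (by positivity))] at hbound
    rw [div_le_iff₀ hlog]
    calc |φ t| * t ^ 2 ≤ c * (log t / t ^ 2) * t ^ 2 := by gcongr
      _ = c * log t := by field_simp
      _ ≤ max C₁ c * log t := by gcongr; exact le_max_right _ _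

/-- The Riccati equation `θ' = -k θ² + F` is linearized by `u = exp (k ∫ θ)`. -/
theorem exists_pos_hasDerivAt_of_riccati {θ F : ℝ → ℝ} {T k : ℝ} (hθc : ContinuousOn θ (Ici T))
    (hθ : ∀ x > T, HasDerivAt θ (-k * θ x ^ 2 + F x) x) :
    ∃ u : ℝ → ℝ, (∀ x, 0 < u x) ∧ (∀ x > T, HasDerivAt u (k * θ x * u x) x) ∧
      ∀ x > T, HasDerivAt (fun t => k * θ t * u t) (k * F x * u x) x := by
  have hP : ∀ x > T, HasDerivAt (fun t => ∫ s in T..t, θ s) (θ x) x := fun x hx =>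
    intervalIntegral.integral_hasDerivAt_right
      ((hθc.mono (uIcc_of_le hx.le ▸ Icc_subset_Ici_self)).intervalIntegrable)
      ⟨Ici T, Ici_mem_nhds hx, hθc.aestronglyMeasurable measurableSet_Ici⟩
      (hθc.continuousAt (Ici_mem_nhds hx))
  have hu : ∀ x > T, HasDerivAt (fun t => exp (k * ∫ s in T..t, θ s))
      (k * θ x * exp (k * ∫ s in T..x, θ s)) x := fun x hx =>
    ((hP x hx).const_mul k).exp.congr_deriv (by ring)
  exact ⟨_, fun x => exp_pos _, hu, fun x hx =>
    (((hθ x hx).const_mul k).mul (hu x hx)).congr_deriv (by ring)⟩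

theorem ode_asymptotics_general (T K₀ : ℝ) (hT : 3 ≤ T) (hK₀ : 0 < K₀) (θ F : ℝ → ℝ)
    (hθ0 : ∀ t ≥ T, 0 ≤ θ t)
    (hC1 : ContDiffOn ℝ 1 θ (Set.Ici T))
    (hode : ∀ t > T, deriv θ t = -(3 / 2) * (θ t) ^ 2 + F t)
    (hF : ∀ t ≥ T, |F t| ≤ K₀ * t ^ (-(3:ℝ))) :
    ∃ θs : ℝ, ∃ C : ℝ, ∀ t ≥ T, |θ t - θs / t| * t ^ 2 / Real.log t ≤ C := by
  have hθ : ∀ x > T, HasDerivAt θ (-(3 / 2) * θ x ^ 2 + F x) x := fun x hx =>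
    hode x hx ▸ ((hC1.differentiableOn one_ne_zero x hx.le).differentiableAt
      (Ici_mem_nhds hx)).hasDerivAt
  obtain ⟨u, hu₀, hu, hv⟩ := exists_pos_hasDerivAt_of_riccati hC1.continuousOn hθ
  have hw : ∀ x ≥ T + 1, |3 / 2 * F x * u x| ≤ 3 / 2 * K₀ * u x / x ^ 3 := fun x hx => by
    have hx₀ : 0 < x := by linarith
    have hFx := hF x (by linarith)
    rw [rpow_neg hx₀.le, rpow_ofNat] at hFx
    rw [abs_mul, abs_mul, abs_of_pos (hu₀ x), abs_of_pos (by norm_num : (0 : ℝ) < 3 / 2)]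
    calc 3 / 2 * |F x| * u x ≤ 3 / 2 * (K₀ * (x ^ 3)⁻¹) * u x := by gcongr; exact hu₀ x |>.le
      _ = 3 / 2 * K₀ * u x / x ^ 3 := by ring
  obtain ⟨l, hl⟩ := exists_isBigO_deriv_div_sub (by linarith) (by positivity)
    (fun x hx => hu x (by linarith)) (fun x hx => hv x (by linarith)) hw (fun x _ => hu₀ x)
    fun x hx => by have := hθ0 x (by linarith); have := hu₀ x; positivity
  refine ⟨2 / 3 * l, exists_bound_of_isBigO_log_div_sq (by linarith)
    (hC1.continuousOn.sub (continuousOn_const.div continuousOn_id fun x hx => ?_)) ?_⟩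
  · exact (by linarith [mem_Ici.1 hx] : (0 : ℝ) < x).ne'
  · refine (hl.const_mul_left (2 / 3)).congr_left fun t => ?_
    field_simp [(hu₀ t).ne']

/-- Asymptotics for the ODE `θ' = -(3/2)θ² + F` with `|F(t)| ≤ K₀ t^{-3}`:
`θ(t) = θ*/t + O(t^{-2} ln t)`. -/
theorem ode_asymptotics (T K₀ : ℝ) (hT : 3 ≤ T) (hK₀ : 0 < K₀) (θ F : ℝ → ℝ)
    (hθ0 : ∀ t ≥ T, 0 ≤ θ t)
    (hC1 : ContDiffOn ℝ 1 θ (Set.Ici T))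
    (hbdd : ∃ M : ℝ, ∀ t ≥ T, t * θ t ≤ M)
    (hode : ∀ t > T, deriv θ t = -(3 / 2) * (θ t) ^ 2 + F t)
    (hF : ∀ t ≥ T, |F t| ≤ K₀ * t ^ (-(3:ℝ))) :
    ∃ θs : ℝ, ∃ C : ℝ, ∀ t ≥ T, |θ t - θs / t| * t ^ 2 / Real.log t ≤ C :=
  ode_asymptotics_general T K₀ hT hK₀ θ F hθ0 hC1 hode hF
end
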